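/- arXiv:2309.05596 — 6 statements merged into one kernel-verified Lean document; each statement's English description precedes it below -/
import Mathlib

section
/- Let q2 > 0, let h1 : [0,∞) → ℝ satisfy h1(t) ≥ 0 for all t ≥ 0, and let β : [0,1] × [0,∞) → ℝ be continuously differentiable and satisfy ∂t β(x,t) = q2 ∂x β(x,t) on [0,1] × [0,∞) with β(1,t) = h1(t) for all t ≥ 0. Then β(x,t) ≥ 0 for all x ∈ [0,1] and all t ≥ 1/q2. -/
/-!
Along each characteristic `s ↦ (x + q2 s, t - s)` the transport equation makes the derivative of
`β` equal to `q2 ∂x β - ∂t β = 0`, so `β` is constant there. Off the boundary the chain rule is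
available because continuous partial derivatives give differentiability; the endpoints of the
characteristic are reached by continuity. When `t ≥ 1/q2`, the characteristic through `(x, t)`
meets the boundary `x = 1` at the time `t - (1 - x)/q2 ≥ 0`, where `β` equals `h1 ≥ 0`.
-/

open Set Filter Topology Function

lemma eq_of_hasDerivAt_zero_on_Ioo {f : ℝ → ℝ} {a b : ℝ} (hab : a ≤ b)
    (hf : ContinuousOn f (Icc a b)) (hf' : ∀ x ∈ Ioo a b, HasDerivAt f 0 x) : f b = f a := by
  rcases hab.eq_or_lt with rfl | hab
  · rfl
  obtain ⟨-, -, hslope⟩ := exists_hasDerivAt_eq_slope f (fun _ => 0) hab hf hf'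
  rw [eq_comm, div_eq_zero_iff, sub_eq_zero] at hslope
  exact hslope.resolve_right (sub_ne_zero.2 hab.ne')

section ContinuousPartials

variable {f f₁ f₂ : ℝ → ℝ → ℝ} {U : Set (ℝ × ℝ)}

lemma hasDerivAt_comp_line_of_continuousOn_partials (hU : IsOpen U)
    (hf₁ : ∀ q ∈ U, HasDerivAt (f · q.2) (f₁ q.1 q.2) q.1)
    (hf₂ : ∀ q ∈ U, HasDerivAt (f q.1 ·) (f₂ q.1 q.2) q.2)
    (hc₁ : ContinuousOn (uncurry f₁) U) (hc₂ : ContinuousOn (uncurry f₂) U)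
    {a b v w s : ℝ} (hs : (a + v * s, b + w * s) ∈ U) :
    HasDerivAt (fun s => f (a + v * s) (b + w * s))
      (v * f₁ (a + v * s) (b + w * s) + w * f₂ (a + v * s) (b + w * s)) s := by
  have hU : U ∈ 𝓝 (a + v * s, b + w * s) := hU.mem_nhds hs
  have hf := hasStrictFDerivAt_uncurry_coprod (𝕜 := ℝ) (f := f)
    (f₁ := fun x y => (1 : ℝ →L[ℝ] ℝ).smulRight (f₁ x y))
    (f₂ := fun x y => (1 : ℝ →L[ℝ] ℝ).smulRight (f₂ x y))
    (mem_of_superset hU fun q hq => hf₁ q hq) (mem_of_superset hU fun q hq => hf₂ q hq)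
    ((ContinuousLinearMap.smulRightL ℝ ℝ ℝ 1).continuous.continuousAt.comp (hc₁.continuousAt hU))
    ((ContinuousLinearMap.smulRightL ℝ ℝ ℝ 1).continuous.continuousAt.comp (hc₂.continuousAt hU))
  have hline : HasDerivAt (fun s : ℝ => (a + v * s, b + w * s)) (v, w) s := by
    simpa using ((hasDerivAt_id s).const_mul v |>.const_add a).prodMk
      ((hasDerivAt_id s).const_mul w |>.const_add b)
  refine (hf.hasFDerivAt.comp_hasDerivAt s hline).congr_deriv ?_
  change (1 : ℝ →L[ℝ] ℝ).smulRight (f₁ _ _) v + (1 : ℝ →L[ℝ] ℝ).smulRight (f₂ _ _) w = _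
  simp

lemma hasDerivAt_zero_along_characteristic {q : ℝ} (hU : IsOpen U)
    (hf₁ : ∀ p ∈ U, HasDerivAt (f · p.2) (f₁ p.1 p.2) p.1)
    (hf₂ : ∀ p ∈ U, HasDerivAt (f p.1 ·) (f₂ p.1 p.2) p.2)
    (hc₁ : ContinuousOn (uncurry f₁) U) (hc₂ : ContinuousOn (uncurry f₂) U)
    (hpde : ∀ p ∈ U, f₂ p.1 p.2 = q * f₁ p.1 p.2)
    {x t s : ℝ} (hs : (x + q * s, t - s) ∈ U) :
    HasDerivAt (fun s => f (x + q * s) (t - s)) 0 s := by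
  have hs' : (x + q * s, t + -1 * s) ∈ U := by rwa [neg_one_mul, ← sub_eq_add_neg]
  have h := hasDerivAt_comp_line_of_continuousOn_partials hU hf₁ hf₂ hc₁ hc₂ hs'
  simp only [neg_one_mul, ← sub_eq_add_neg, hpde _ hs] at h
  convert h using 1
  ring

end ContinuousPartials

/-- Nonnegativity of the transport-PDE barrier:
if `∂t β = q2 ∂x β` on `[0,1] × [0,∞)` with `β(1,t) = h1(t) ≥ 0`,
then `β(x,t) ≥ 0` for all `x ∈ [0,1]` and `t ≥ 1/q2`. -/
theorem transport_barrier_nonneg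
    (q2 : ℝ) (hq2 : 0 < q2)
    (β βx βt : ℝ → ℝ → ℝ) (h1 : ℝ → ℝ)
    (hh1 : ∀ t ∈ Ici (0:ℝ), 0 ≤ h1 t)
    -- continuous differentiability of β on [0,1] × [0,∞):
    (hβc : ContinuousOn (fun p : ℝ × ℝ => β p.1 p.2) (Icc 0 1 ×ˢ Ici 0))
    (hβx : ∀ x ∈ Icc (0:ℝ) 1, ∀ t ∈ Ici (0:ℝ),
      HasDerivWithinAt (fun x' => β x' t) (βx x t) (Icc 0 1) x)
    (hβt : ∀ x ∈ Icc (0:ℝ) 1, ∀ t ∈ Ici (0:ℝ),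
      HasDerivWithinAt (fun t' => β x t') (βt x t) (Ici 0) t)
    (hβxc : ContinuousOn (fun p : ℝ × ℝ => βx p.1 p.2) (Icc 0 1 ×ˢ Ici 0))
    (hβtc : ContinuousOn (fun p : ℝ × ℝ => βt p.1 p.2) (Icc 0 1 ×ˢ Ici 0))
    -- the transport equation ∂t β = q2 ∂x β on [0,1] × [0,∞):
    (hPDE : ∀ x ∈ Icc (0:ℝ) 1, ∀ t ∈ Ici (0:ℝ), βt x t = q2 * βx x t)
    -- boundary condition β(1,t) = h1(t):
    (hBC : ∀ t ∈ Ici (0:ℝ), β 1 t = h1 t) :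
    ∀ x ∈ Icc (0:ℝ) 1, ∀ t, 1 / q2 ≤ t → 0 ≤ β x t := by
  intro x hx t ht
  set c := (1 - x) / q2
  have hc0 : 0 ≤ c := div_nonneg (by linarith [hx.2]) hq2.le
  have hxc : x + q2 * c = 1 := by simp only [c]; field_simp; ring
  have hct : c ≤ t := le_trans (div_le_div_of_nonneg_right (by linarith [hx.1]) hq2.le) ht
  have hmaps : ∀ s ∈ Icc 0 c, (x + q2 * s, t - s) ∈ Icc (0 : ℝ) 1 ×ˢ Ici (0 : ℝ) := fun s hs =>
    ⟨⟨by nlinarith [hx.1, hs.1], by nlinarith [hs.2]⟩, sub_nonneg.2 (hs.2.trans hct)⟩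
  have hmaps_interior : ∀ s ∈ Ioo 0 c, (x + q2 * s, t - s) ∈ Ioo (0 : ℝ) 1 ×ˢ Ioi (0 : ℝ) :=
    fun s hs => ⟨⟨by nlinarith [hx.1, hs.1], by nlinarith [hs.2]⟩, sub_pos.2 (hs.2.trans_le hct)⟩
  have hsub : Ioo (0 : ℝ) 1 ×ˢ Ioi (0 : ℝ) ⊆ Icc 0 1 ×ˢ Ici 0 :=
    prod_mono Ioo_subset_Icc_self Ioi_subset_Ici_self
  have hderiv : ∀ s ∈ Ioo 0 c, HasDerivAt (fun s => β (x + q2 * s) (t - s)) 0 s :=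
    fun s hs => hasDerivAt_zero_along_characteristic (isOpen_Ioo.prod isOpen_Ioi)
      (fun p hp => (hβx _ (hsub hp).1 _ (hsub hp).2).hasDerivAt (Icc_mem_nhds hp.1.1 hp.1.2))
      (fun p hp => (hβt _ (hsub hp).1 _ (hsub hp).2).hasDerivAt (Ici_mem_nhds hp.2))
      (hβxc.mono hsub) (hβtc.mono hsub) (fun p hp => hPDE p.1 (hsub hp).1 p.2 (hsub hp).2)
      (hmaps_interior s hs)
  have hcont : ContinuousOn (fun s => β (x + q2 * s) (t - s)) (Icc 0 c) :=
    hβc.comp (f := fun s => (x + q2 * s, t - s)) (by fun_prop) hmaps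
  have hconst := eq_of_hasDerivAt_zero_on_Ioo hc0 hcont hderiv
  simp only [mul_zero, add_zero, sub_zero, hxc] at hconst
  have hexit : t - c ∈ Ici 0 := (hmaps c (right_mem_Icc.2 hc0)).2
  rw [← hconst, hBC _ hexit]
  exact hh1 _ hexit
end

section
/- Let m, n ≥ 1 be integers, q2 > 0, b > 0, and let c_1, …, c_m and κ_1, …, κ_n be positive real numbers. Suppose: (i) h = (h_1, …, h_m) : [0,∞) → ℝ^m is continuously differentiable with h_i' = −c_i h_i + h_{i+1} for 1 ≤ i ≤ m−1 and h_m' = −c_m h_m; (ii) β : [0,1] × [0,∞) → ℝ is continuously differentiable with ∂t β(x,t) = q2 ∂x β(x,t) and β(1,t) = h_1(t) for all t ≥ 0; (iii) Z = (Z_1, …, Z_n) : [0,∞) → ℝ^n is continuously differentiable with Z_j' = −κ_j Z_j + Z_{j+1} for 1 ≤ j ≤ n−1 and Z_n'(t) = −κ_n Z_n(t) + b·β(0,t). If h_i(0) > 0 for all 1 ≤ i ≤ m and Z_j(1/q2) > 0 for all 1 ≤ j ≤ n, then h_i(t) ≥ 0 for all i and all t ≥ 0, β(x,t) ≥ 0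 for all x ∈ [0,1] and all t ≥ 1/q2, and Z_j(t) ≥ 0 for all j and all t ≥ 1/q2; in particular Z_1(t) ≥ 0 for all t ≥ 1/q2. -/
/-!
Each chain is solved from its last component upwards: a component solves `y' = -k y + g` with a
nonnegative forcing `g` (the next component, `0`, or `b β(0, ·)`), so `e^{k t} y` is nondecreasing
and `y` stays nonnegative. The transport equation makes `β` constant along the characteristics
`s ↦ (x + q2 s, t - s)`, hence `β(x, t) = h_1(t - (1 - x)/q2)` once `t ≥ 1/q2`; this is why the
distal chain is started at time `1/q2`.
-/

open Set Filter Topology Function Asymptotics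

theorem nonneg_of_hasDerivAt_neg_mul_add {k T : ℝ} {y g : ℝ → ℝ}
    (hy : ∀ t, T ≤ t → HasDerivAt y (-k * y t + g t) t)
    (hg : ∀ t, T ≤ t → 0 ≤ g t) (hyT : 0 ≤ y T) {t : ℝ} (ht : T ≤ t) : 0 ≤ y t := by
  set ψ : ℝ → ℝ := fun u => Real.exp (k * u) * y u
  have hψ : ∀ u, T ≤ u → HasDerivAt ψ (Real.exp (k * u) * g u) u := fun u hu =>
    (((hasDerivAt_id' u).const_mul k).exp.mul (hy u hu)).congr_deriv (by ring)
  have hmono : MonotoneOn ψ (Ici T) :=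
    monotoneOn_of_hasDerivWithinAt_nonneg (convex_Ici T)
      (fun u hu => (hψ u hu).continuousAt.continuousWithinAt)
      (fun u hu => (hψ u (interior_subset hu)).hasDerivWithinAt)
      (fun u hu => mul_nonneg (Real.exp_pos _).le (hg u (interior_subset hu)))
  have : 0 ≤ ψ t := (mul_nonneg (Real.exp_pos _).le hyT).trans (hmono self_mem_Ici ht ht)
  exact (mul_nonneg_iff_of_pos_left (Real.exp_pos _)).1 this

theorem cascade_nonneg {N : ℕ} {T : ℝ} {k : ℕ → ℝ} {y : ℝ → ℕ → ℝ} {g : ℝ → ℝ}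
    (hy : ∀ i, 1 ≤ i → i ≤ N - 1 → ∀ t, T ≤ t →
      HasDerivAt (fun s => y s i) (-k i * y t i + y t (i + 1)) t)
    (hyN : ∀ t, T ≤ t → HasDerivAt (fun s => y s N) (-k N * y t N + g t) t)
    (hg : ∀ t, T ≤ t → 0 ≤ g t) (hyT : ∀ i, 1 ≤ i → i ≤ N → 0 ≤ y T i) :
    ∀ i, 1 ≤ i → i ≤ N → ∀ t, T ≤ t → 0 ≤ y t i := by
  suffices ∀ d i, 1 ≤ i → i + d = N → ∀ t, T ≤ t → 0 ≤ y t i from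
    fun i hi hiN => this (N - i) i hi (by omega)
  intro d
  induction d with
  | zero =>
    rintro i hi rfl t ht
    exact nonneg_of_hasDerivAt_neg_mul_add hyN hg (hyT i hi le_rfl) ht
  | succ d ih =>
    intro i hi hid t ht
    exact nonneg_of_hasDerivAt_neg_mul_add (fun t ht => hy i hi (by omega) t ht)
      (ih (i + 1) (by omega) (by omega)) (hyT i hi (by omega)) ht

theorem Convex.apply_add_eq_of_hasFDerivWithinAt_apply_eq_zero {E G : Type*}
    [NormedAddCommGroup E] [NormedSpace ℝ E] [NormedAddCommGroup G] [NormedSpace ℝ G]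
    {F : E → G} {F' : E → E →L[ℝ] G} {S : Set E} {p v : E} (hS : Convex ℝ S)
    (hF : ∀ x ∈ S, HasFDerivWithinAt F (F' x) S x) (hv : ∀ x ∈ S, F' x v = 0)
    (hp : p ∈ S) (hpv : p + v ∈ S) : F (p + v) = F p := by
  set γ := AffineMap.lineMap (k := ℝ) p (p + v)
  have hγ : ∀ r ∈ γ ⁻¹' S, HasDerivWithinAt (F ∘ γ) 0 (γ ⁻¹' S) r := fun r hr => by
    have := (hF (γ r) hr).comp_hasDerivWithinAt r
      (AffineMap.hasDerivWithinAt_lineMap (a := p) (b := p + v)) (mapsTo_preimage γ S)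
    rwa [add_sub_cancel_left, hv _ hr] at this
  have h := (hS.affine_preimage γ).norm_image_sub_le_of_norm_hasDerivWithin_le hγ
    (fun _ _ => norm_zero.le) (x := 0) (y := 1)
    (by simpa [γ] using hp) (by simpa [γ] using hpv)
  simpa [γ, sub_eq_zero] using h

theorem hasFDerivWithinAt_uncurry_of_partials {f fx : ℝ → ℝ → ℝ} {fy : ℝ} {I J : Set ℝ}
    {p : ℝ × ℝ} (hI : Convex ℝ I) (hp : p.1 ∈ I)
    (hfx : ∀ x ∈ I, ∀ y ∈ J, HasDerivWithinAt (f · y) (fx x y) I x)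
    (hfxc : ContinuousWithinAt (uncurry fx) (I ×ˢ J) p)
    (hfy : HasDerivWithinAt (f p.1) fy J p.2) :
    HasFDerivWithinAt (uncurry f)
      (fx p.1 p.2 • ContinuousLinearMap.fst ℝ ℝ ℝ + fy • ContinuousLinearMap.snd ℝ ℝ ℝ)
      (I ×ˢ J) p := by
  -- Split the increment at the corner `(p.1, q.2)`: the horizontal part is controlled by the
  -- mean value theorem and the continuity of `fx` at `p`, the vertical one by `hfy` alone.
  rw [hasFDerivWithinAt_iff_isLittleO]
  have hA : (fun q : ℝ × ℝ => f q.1 q.2 - f p.1 q.2 - fx p.1 p.2 * (q.1 - p.1))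
      =o[𝓝[I ×ˢ J] p] fun q => q - p := by
    refine isLittleO_iff.2 fun ε hε => ?_
    obtain ⟨δ, hδ, hfxδ⟩ := Metric.continuousWithinAt_iff.1 hfxc ε hε
    filter_upwards [inter_mem_nhdsWithin (I ×ˢ J) (Metric.ball_mem_nhds p hδ)]
      with q ⟨⟨hq1, hq2⟩, hqp⟩
    rw [Metric.mem_ball, Prod.dist_eq, max_lt_iff] at hqp
    have hpq : p.1 ∈ I ∩ Metric.ball p.1 δ := ⟨hp, Metric.mem_ball_self hδ⟩
    have hqq : q.1 ∈ I ∩ Metric.ball p.1 δ := ⟨hq1, hqp.1⟩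
    have hderiv : ∀ v ∈ I ∩ Metric.ball p.1 δ, HasDerivWithinAt
        (fun v => f v q.2 - v * fx p.1 p.2) (fx v q.2 - fx p.1 p.2) (I ∩ Metric.ball p.1 δ) v :=
      fun v hv => ((hfx v hv.1 q.2 hq2).sub (hasDerivAt_mul_const _).hasDerivWithinAt).mono
        inter_subset_left
    have hbound : ∀ v ∈ I ∩ Metric.ball p.1 δ, ‖fx v q.2 - fx p.1 p.2‖ ≤ ε :=
      fun v hv => (hfxδ (x := (v, q.2)) ⟨hv.1, hq2⟩ (max_lt hv.2 hqp.2)).le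
    have hmvt := (hI.inter (convex_ball p.1 δ)).norm_image_sub_le_of_norm_hasDerivWithin_le
      hderiv hbound hpq hqq
    calc ‖f q.1 q.2 - f p.1 q.2 - fx p.1 p.2 * (q.1 - p.1)‖
        = ‖f q.1 q.2 - q.1 * fx p.1 p.2 - (f p.1 q.2 - p.1 * fx p.1 p.2)‖ := by ring_nf
      _ ≤ ε * ‖q.1 - p.1‖ := hmvt
      _ ≤ ε * ‖q - p‖ := by gcongr; exact norm_fst_le (q - p)
  have hB : (fun q : ℝ × ℝ => f p.1 q.2 - f p.1 p.2 - fy * (q.2 - p.2))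
      =o[𝓝[I ×ˢ J] p] fun q => q - p := by
    have h := hfy.isLittleO.comp_tendsto
      (continuous_snd.continuousWithinAt.tendsto_nhdsWithin (mapsTo_snd_prod (s := I)))
    refine (h.trans_isBigO (isBigO_of_le _ fun q => ?_)).congr_left fun q => ?_
    · simpa using norm_snd_le (q - p)
    · simp [mul_comm]
  refine (hA.add hB).congr_left fun q => ?_
  simp only [uncurry, add_apply, smul_apply,
    ContinuousLinearMap.coe_fst', ContinuousLinearMap.coe_snd', Prod.fst_sub, Prod.snd_sub,
    smul_eq_mul]
  ring

theorem transport_eq_along_characteristic {β βx βt : ℝ → ℝ → ℝ} {I J : Set ℝ} {q x t s : ℝ}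
    (hI : Convex ℝ I) (hJ : Convex ℝ J)
    (hβx : ∀ x ∈ I, ∀ t ∈ J, HasDerivWithinAt (β · t) (βx x t) I x)
    (hβt : ∀ x ∈ I, ∀ t ∈ J, HasDerivWithinAt (β x ·) (βt x t) J t)
    (hβxc : ContinuousOn (uncurry βx) (I ×ˢ J))
    (hPDE : ∀ x ∈ I, ∀ t ∈ J, βt x t = q * βx x t)
    (hxt : (x, t) ∈ I ×ˢ J) (hs : (x + q * s, t - s) ∈ I ×ˢ J) :
    β (x + q * s) (t - s) = β x t := by
  have key := (hI.prod hJ).apply_add_eq_of_hasFDerivWithinAt_apply_eq_zero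
    (F := uncurry β) (v := (q * s, -s))
    (fun p hp => hasFDerivWithinAt_uncurry_of_partials hI hp.1 hβx
      (hβxc p hp) (hβt p.1 hp.1 p.2 hp.2))
    (fun p hp => by
      simp only [hPDE p.1 hp.1 p.2 hp.2, add_apply, smul_apply, ContinuousLinearMap.coe_fst',
        ContinuousLinearMap.coe_snd', smul_eq_mul, mul_neg]
      ring)
    hxt (by simpa [sub_eq_add_neg] using hs)
  simpa [sub_eq_add_neg] using key

theorem cascade_safety_general
    (m n : ℕ) (hm : 1 ≤ m) (hn : 1 ≤ n)
    (q2 b : ℝ) (hq2 : 0 < q2) (hb : 0 < b)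
    (c : ℕ → ℝ) (κ : ℕ → ℝ)
    (h : ℝ → ℕ → ℝ) (β βx βt : ℝ → ℝ → ℝ) (Z : ℝ → ℕ → ℝ)
    -- (i) the proximal ODE chain:
    (hode : ∀ i, 1 ≤ i → i ≤ m - 1 → ∀ t, 0 ≤ t →
      HasDerivAt (fun s => h s i) (-c i * h t i + h t (i + 1)) t)
    (hodem : ∀ t, 0 ≤ t → HasDerivAt (fun s => h s m) (-c m * h t m) t)
    -- (ii) the transport PDE, continuously differentiable, with β(1,t) = h_1(t):
    (hβx : ∀ x ∈ Icc (0:ℝ) 1, ∀ t ∈ Ici (0:ℝ),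
      HasDerivWithinAt (fun x' => β x' t) (βx x t) (Icc 0 1) x)
    (hβt : ∀ x ∈ Icc (0:ℝ) 1, ∀ t ∈ Ici (0:ℝ),
      HasDerivWithinAt (fun t' => β x t') (βt x t) (Ici 0) t)
    (hβxc : ContinuousOn (fun p : ℝ × ℝ => βx p.1 p.2) (Icc 0 1 ×ˢ Ici 0))
    (hPDE : ∀ x ∈ Icc (0:ℝ) 1, ∀ t ∈ Ici (0:ℝ), βt x t = q2 * βx x t)
    (hBC : ∀ t ∈ Ici (0:ℝ), β 1 t = h t 1)
    -- (iii) the distal ODE chain driven by b·β(0,t):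
    (hZode : ∀ j, 1 ≤ j → j ≤ n - 1 → ∀ t, 0 ≤ t →
      HasDerivAt (fun s => Z s j) (-κ j * Z t j + Z t (j + 1)) t)
    (hZoden : ∀ t, 0 ≤ t →
      HasDerivAt (fun s => Z s n) (-κ n * Z t n + b * β 0 t) t)
    -- positive initialization:
    (h0 : ∀ i, 1 ≤ i → i ≤ m → 0 < h 0 i)
    (hZ0 : ∀ j, 1 ≤ j → j ≤ n → 0 < Z (1 / q2) j) :
    (∀ i, 1 ≤ i → i ≤ m → ∀ t, 0 ≤ t → 0 ≤ h t i) ∧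
    (∀ x ∈ Icc (0:ℝ) 1, ∀ t, 1 / q2 ≤ t → 0 ≤ β x t) ∧
    (∀ j, 1 ≤ j → j ≤ n → ∀ t, 1 / q2 ≤ t → 0 ≤ Z t j) ∧
    (∀ t, 1 / q2 ≤ t → 0 ≤ Z t 1) := by
  have hh : ∀ i, 1 ≤ i → i ≤ m → ∀ t, 0 ≤ t → 0 ≤ h t i :=
    cascade_nonneg (g := 0) hode (fun t ht => by simpa using hodem t ht) (fun _ _ => le_rfl)
      fun i hi him => (h0 i hi him).le
  have hT : ∀ t, 1 / q2 ≤ t → 0 ≤ t := fun t ht => (one_div_pos.2 hq2).le.trans ht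
  have hβ : ∀ x ∈ Icc (0:ℝ) 1, ∀ t, 1 / q2 ≤ t → 0 ≤ β x t := by
    intro x hx t ht
    have hdelay : (1 - x) / q2 ≤ 1 / q2 := by gcongr; exact sub_le_self 1 hx.1
    have ht' : 0 ≤ t - (1 - x) / q2 := by linarith
    have hexit : x + q2 * ((1 - x) / q2) = 1 := by field_simp; ring
    have hchar := transport_eq_along_characteristic (convex_Icc 0 1) (convex_Ici 0) hβx hβt
      hβxc hPDE (x := x) (t := t) ⟨hx, hT t ht⟩
      (by rw [hexit]; exact ⟨right_mem_Icc.2 zero_le_one, ht'⟩)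
    rw [← hchar, hexit, hBC _ ht']
    exact hh 1 le_rfl hm _ ht'
  have hZ : ∀ j, 1 ≤ j → j ≤ n → ∀ t, 1 / q2 ≤ t → 0 ≤ Z t j :=
    cascade_nonneg (fun j hj hjn t ht => hZode j hj hjn t (hT t ht))
      (fun t ht => hZoden t (hT t ht))
      (fun t ht => mul_nonneg hb.le (hβ 0 (left_mem_Icc.2 zero_le_one) t ht))
      fun j hj hjn => (hZ0 j hj hjn).le
  exact ⟨hh, hβ, hZ, fun t ht => hZ 1 le_rfl hn t ht⟩

/-- Structural core of property 1 (safety) of Theorem 1: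
the proximal ODE chain `h`, the transport PDE barrier `β` with `β(1,t) = h_1(t)`,
and the distal ODE chain `Z` driven by `b·β(0,t)` are cascaded; positive
initialization propagates to nonnegativity of all barrier functions. -/
theorem cascade_safety
    (m n : ℕ) (hm : 1 ≤ m) (hn : 1 ≤ n)
    (q2 b : ℝ) (hq2 : 0 < q2) (hb : 0 < b)
    (c : ℕ → ℝ) (hc : ∀ i, 1 ≤ i → i ≤ m → 0 < c i)
    (κ : ℕ → ℝ) (hκ : ∀ j, 1 ≤ j → j ≤ n → 0 < κ j)
    (h : ℝ → ℕ → ℝ) (β βx βt : ℝ → ℝ → ℝ) (Z : ℝ → ℕ → ℝ)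
    -- (i) the proximal ODE chain:
    (hode : ∀ i, 1 ≤ i → i ≤ m - 1 → ∀ t, 0 ≤ t →
      HasDerivAt (fun s => h s i) (-c i * h t i + h t (i + 1)) t)
    (hodem : ∀ t, 0 ≤ t → HasDerivAt (fun s => h s m) (-c m * h t m) t)
    -- (ii) the transport PDE, continuously differentiable, with β(1,t) = h_1(t):
    (hβc : ContinuousOn (fun p : ℝ × ℝ => β p.1 p.2) (Icc 0 1 ×ˢ Ici 0))
    (hβx : ∀ x ∈ Icc (0:ℝ) 1, ∀ t ∈ Ici (0:ℝ),
      HasDerivWithinAt (fun x' => β x' t) (βx x t) (Icc 0 1) x)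
    (hβt : ∀ x ∈ Icc (0:ℝ) 1, ∀ t ∈ Ici (0:ℝ),
      HasDerivWithinAt (fun t' => β x t') (βt x t) (Ici 0) t)
    (hβxc : ContinuousOn (fun p : ℝ × ℝ => βx p.1 p.2) (Icc 0 1 ×ˢ Ici 0))
    (hβtc : ContinuousOn (fun p : ℝ × ℝ => βt p.1 p.2) (Icc 0 1 ×ˢ Ici 0))
    (hPDE : ∀ x ∈ Icc (0:ℝ) 1, ∀ t ∈ Ici (0:ℝ), βt x t = q2 * βx x t)
    (hBC : ∀ t ∈ Ici (0:ℝ), β 1 t = h t 1)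
    -- (iii) the distal ODE chain driven by b·β(0,t):
    (hZode : ∀ j, 1 ≤ j → j ≤ n - 1 → ∀ t, 0 ≤ t →
      HasDerivAt (fun s => Z s j) (-κ j * Z t j + Z t (j + 1)) t)
    (hZoden : ∀ t, 0 ≤ t →
      HasDerivAt (fun s => Z s n) (-κ n * Z t n + b * β 0 t) t)
    -- positive initialization:
    (h0 : ∀ i, 1 ≤ i → i ≤ m → 0 < h 0 i)
    (hZ0 : ∀ j, 1 ≤ j → j ≤ n → 0 < Z (1 / q2) j) :
    (∀ i, 1 ≤ i → i ≤ m → ∀ t, 0 ≤ t → 0 ≤ h t i) ∧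
    (∀ x ∈ Icc (0:ℝ) 1, ∀ t, 1 / q2 ≤ t → 0 ≤ β x t) ∧
    (∀ j, 1 ≤ j → j ≤ n → ∀ t, 1 / q2 ≤ t → 0 ≤ Z t j) ∧
    (∀ t, 1 / q2 ≤ t → 0 ≤ Z t 1) :=
  cascade_safety_general m n hm hn q2 b hq2 hb c κ h β βx βt Z hode hodem hβx hβt hβxc hPDE hBC
    hZode hZoden h0 hZ0
end

section
/- Let m, n ≥ 1 be integers, let q1, q2, b > 0, p ∈ ℝ, let κ_1, …, κ_n > 0, and let c_1, …, c_m satisfy c_i > 2 for 1 ≤ i ≤ m−1 and c_m > 1. Let A_Z be the n×n matrix with −κ_j in the (j,j) entries, 1 in the (j,j+1) entries, and zeros elsewhere, and B = (0,…,0,b)ᵀ ∈ ℝⁿ. Suppose Z : [0,∞) → ℝⁿ, α, β : [0,1] × [0,∞) → ℝ and h = (h_1,…,h_m) : [0,∞) → ℝ^m are continuously differentiable and satisfy, for all t ≥ 0 and x ∈ [0,1]: Ż(t) = A_Z Z(t) + B β(0,t); ∂t α(x,t) = −q1 ∂x α(x,t); ∂t β(x,t) = q2 ∂x β(x,t); α(0,t)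 = p β(0,t); β(1,t) = h_1(t); h_i'(t) = −c_i h_i(t) + h_{i+1}(t) for 1 ≤ i ≤ m−1; and h_m'(t) = −c_m h_m(t). Then there exist constants Υ ≥ 1 and σ0 > 0, depending only on m, n, q1, q2, p, b, the c_i and the κ_j (and not on the particular solution), such that Ξ(t) ≤ Υ Ξ(0) e^{−σ0 t} for all t ≥ 0, where Ξ(t) = ∫₀¹ β(x,t)² dx + ∫₀¹ α(x,t)² dx + Σ_{i=1}^{m} h_i(t)² + |Z(t)|². -/
/-!
Lyapunov argument. The functional `V` = `targetLyapunov` is comparable to `Ξ` with constants that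
do not depend on the solution, and along solutions `V' ≤ -σ V`. Indeed, after differentiating under
the integral sign and integrating by parts, each weighted transport energy `∫₀¹ e^{wx} u²` changes
only by boundary terms and a multiple of itself; the proximal chain dissipates its unweighted
energy because `c_i > 2`; the distal chain dissipates a diagonally weighted energy up to its input
`b β(0,t)`. The boundary inputs `h₁(t)²` and `β(0,t)²` left over are absorbed by the dissipation of
the `h`- and `β`-energies through the choice of coefficients in `V`. Hence `V(t) ≤ V(0) e^{-σt}`,
and `Ξ` inherits the bound.
-/

open Set

/-- The squared system norm `Ξ(t)` of the backstepping target system. -/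
noncomputable def targetNorm (m n : ℕ) (α β : ℝ → ℝ → ℝ) (h Z : ℝ → ℕ → ℝ)
    (t : ℝ) : ℝ :=
  (∫ x in (0:ℝ)..1, β x t ^ 2) + (∫ x in (0:ℝ)..1, α x t ^ 2) +
    (∑ i ∈ Finset.Icc 1 m, h t i ^ 2) + (∑ j ∈ Finset.Icc 1 n, Z t j ^ 2)

open MeasureTheory Function Real

section ParametricIntegral

variable {a b : ℝ} {G Gt : ℝ → ℝ → ℝ}

theorem aestronglyMeasurable_of_continuousOn_uncurry (hab : a ≤ b)
    (hG : ContinuousOn (uncurry G) (Icc a b ×ˢ Ici 0)) {t : ℝ} (ht : 0 ≤ t) :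
    AEStronglyMeasurable (fun x => G x t) (volume.restrict (uIoc a b)) := by
  rw [uIoc_of_le hab]
  exact ((hG.uncurry_right t ht).mono Ioc_subset_Icc_self).aestronglyMeasurable measurableSet_Ioc

theorem continuousOn_intervalIntegral_of_continuousOn_uncurry (hab : a ≤ b)
    (hG : ContinuousOn (uncurry G) (Icc a b ×ˢ Ici 0)) :
    ContinuousOn (fun t => ∫ x in a..b, G x t) (Ici 0) := by
  intro t₀ ht₀
  obtain ⟨C, hC⟩ := (isCompact_Icc.prod (isCompact_Icc (a := 0) (b := t₀ + 1))
    ).exists_bound_of_continuousOn (hG.mono (prod_mono le_rfl Icc_subset_Ici_self))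
  have hnear : Icc 0 (t₀ + 1) ∈ nhdsWithin t₀ (Ici 0) :=
    Filter.mem_of_superset (inter_mem_nhdsWithin _ (Iio_mem_nhds (lt_add_one t₀)))
      fun t ht => ⟨ht.1, ht.2.le⟩
  refine intervalIntegral.continuousWithinAt_of_dominated_interval (bound := fun _ => C) ?_ ?_
    intervalIntegrable_const ?_
  · filter_upwards [hnear] with t ht
    exact aestronglyMeasurable_of_continuousOn_uncurry hab hG ht.1
  · filter_upwards [hnear] with t ht
    refine Filter.Eventually.of_forall fun x hx => hC (x, t) ⟨?_, ht⟩
    rw [uIoc_of_le hab] at hx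
    exact Ioc_subset_Icc_self hx
  · refine Filter.Eventually.of_forall fun x hx => hG.uncurry_left x ?_ t₀ ht₀
    rw [uIoc_of_le hab] at hx
    exact Ioc_subset_Icc_self hx

theorem hasDerivAt_intervalIntegral_of_continuousOn_uncurry (hab : a ≤ b)
    (hG : ContinuousOn (uncurry G) (Icc a b ×ˢ Ici 0))
    (hGt : ContinuousOn (uncurry Gt) (Icc a b ×ˢ Ici 0))
    (hd : ∀ x ∈ Icc a b, ∀ t ∈ Ici (0 : ℝ), HasDerivWithinAt (G x) (Gt x t) (Ici 0) t)
    {t₀ : ℝ} (ht₀ : 0 < t₀) :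
    HasDerivAt (fun t => ∫ x in a..b, G x t) (∫ x in a..b, Gt x t₀) t₀ := by
  obtain ⟨C, hC⟩ := (isCompact_Icc.prod (isCompact_Icc (a := t₀ / 2) (b := 2 * t₀))
    ).exists_bound_of_continuousOn
      (hGt.mono (prod_mono le_rfl fun t ht => le_trans (by positivity) ht.1))
  have hnear : Ioo (t₀ / 2) (2 * t₀) ∈ nhds t₀ := Ioo_mem_nhds (by linarith) (by linarith)
  have hIoc : uIoc a b ⊆ Icc a b := by rw [uIoc_of_le hab]; exact Ioc_subset_Icc_self
  refine (intervalIntegral.hasDerivAt_integral_of_dominated_loc_of_deriv_le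
    (F := fun t x => G x t) (F' := fun t x => Gt x t) (bound := fun _ => C)
    hnear ?_ ?_ (aestronglyMeasurable_of_continuousOn_uncurry hab hGt ht₀.le) ?_
    intervalIntegrable_const ?_).2
  · filter_upwards [hnear] with t ht
    exact aestronglyMeasurable_of_continuousOn_uncurry hab hG (by linarith [ht.1])
  · exact ((hG.uncurry_right t₀ ht₀.le).mono (by rw [uIcc_of_le hab])).intervalIntegrable
  · exact Filter.Eventually.of_forall fun x hx t ht =>
      hC (x, t) ⟨hIoc hx, Ioo_subset_Icc_self ht⟩
  · refine Filter.Eventually.of_forall fun x hx t ht => ?_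
    have ht0 : 0 < t := by linarith [ht.1]
    exact (hd x (hIoc hx) t ht0.le).hasDerivAt (Ici_mem_nhds ht0)

end ParametricIntegral

theorem integral_exp_mul_mul_two_mul_deriv {a b w : ℝ} {f f' : ℝ → ℝ} (hab : a ≤ b)
    (hf : ContinuousOn f (Icc a b)) (hf' : ContinuousOn f' (Icc a b))
    (hd : ∀ x ∈ Icc a b, HasDerivWithinAt f (f' x) (Icc a b) x) :
    ∫ x in a..b, exp (w * x) * (2 * f x * f' x) =
      exp (w * b) * f b ^ 2 - exp (w * a) * f a ^ 2 - w * ∫ x in a..b, exp (w * x) * f x ^ 2 := by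
  have hexp : Continuous fun x => exp (w * x) := by fun_prop
  have hint : IntervalIntegrable (fun x => exp (w * x) * f x ^ 2) volume a b :=
    ((hexp.continuousOn.mul (hf.pow 2)).mono (by rw [uIcc_of_le hab])).intervalIntegrable
  have hint' : IntervalIntegrable (fun x => exp (w * x) * (2 * f x * f' x)) volume a b :=
    ((hexp.continuousOn.mul ((continuousOn_const.mul hf).mul hf')).mono
      (by rw [uIcc_of_le hab])).intervalIntegrable
  have hftc := intervalIntegral.integral_eq_sub_of_hasDeriv_right_of_le hab
    (f := fun x => exp (w * x) * f x ^ 2) (hexp.continuousOn.mul (hf.pow 2)) (fun x hx => ?_)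
    ((hint.const_mul w).add hint')
  · rw [intervalIntegral.integral_add (hint.const_mul w) hint',
      intervalIntegral.integral_const_mul] at hftc
    linarith
  · have hfx : HasDerivAt f (f' x) x :=
      (hd x (Ioo_subset_Icc_self hx)).hasDerivAt (Icc_mem_nhds hx.1 hx.2)
    have hexpx : HasDerivAt (fun x => exp (w * x)) (exp (w * x) * w) x :=
      ((hasDerivAt_id x).const_mul w).exp.congr_deriv (by simp)
    exact ((hexpx.fun_mul (hfx.fun_pow 2)).congr_deriv (by push_cast; ring)).hasDerivWithinAt

structure IsTransportSolution (v : ℝ) (u ux ut : ℝ → ℝ → ℝ) : Prop where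
  continuousOn : ContinuousOn (uncurry u) (Icc 0 1 ×ˢ Ici 0)
  hasDerivWithinAt_x : ∀ x ∈ Icc (0 : ℝ) 1, ∀ t ∈ Ici (0 : ℝ),
    HasDerivWithinAt (fun x' => u x' t) (ux x t) (Icc 0 1) x
  hasDerivWithinAt_t : ∀ x ∈ Icc (0 : ℝ) 1, ∀ t ∈ Ici (0 : ℝ),
    HasDerivWithinAt (fun t' => u x t') (ut x t) (Ici 0) t
  continuousOn_x : ContinuousOn (uncurry ux) (Icc 0 1 ×ˢ Ici 0)
  continuousOn_t : ContinuousOn (uncurry ut) (Icc 0 1 ×ˢ Ici 0)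
  ut_eq : ∀ x ∈ Icc (0 : ℝ) 1, ∀ t ∈ Ici (0 : ℝ), ut x t = v * ux x t

noncomputable def weightedEnergy (w : ℝ) (u : ℝ → ℝ → ℝ) (t : ℝ) : ℝ :=
  ∫ x in (0 : ℝ)..1, exp (w * x) * u x t ^ 2

theorem weightedEnergy_nonneg (w : ℝ) (u : ℝ → ℝ → ℝ) (t : ℝ) : 0 ≤ weightedEnergy w u t :=
  intervalIntegral.integral_nonneg zero_le_one fun _ _ => by positivity

theorem weightedEnergy_bounds {u : ℝ → ℝ → ℝ} {t : ℝ} (w : ℝ)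
    (hu : ContinuousOn (fun x => u x t) (Icc 0 1)) :
    exp (-|w|) * ∫ x in (0 : ℝ)..1, u x t ^ 2 ≤ weightedEnergy w u t ∧
      weightedEnergy w u t ≤ exp |w| * ∫ x in (0 : ℝ)..1, u x t ^ 2 := by
  have hsq : IntervalIntegrable (fun x => u x t ^ 2) volume 0 1 :=
    ((hu.pow 2).mono (by rw [uIcc_of_le zero_le_one])).intervalIntegrable
  have hw : IntervalIntegrable (fun x => exp (w * x) * u x t ^ 2) volume 0 1 :=
    (((continuous_const.mul continuous_id).rexp.continuousOn.mul (hu.pow 2)).mono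
      (by rw [uIcc_of_le zero_le_one])).intervalIntegrable
  have hwx : ∀ x ∈ Icc (0 : ℝ) 1, |w * x| ≤ |w| := fun x hx => by
    rw [abs_mul, abs_of_nonneg hx.1]; exact mul_le_of_le_one_right (abs_nonneg w) hx.2
  rw [weightedEnergy, ← intervalIntegral.integral_const_mul, ← intervalIntegral.integral_const_mul]
  constructor
  · refine intervalIntegral.integral_mono_on zero_le_one (hsq.const_mul _) hw fun x hx => ?_
    gcongr
    exact neg_le_of_abs_le (hwx x hx)
  · refine intervalIntegral.integral_mono_on zero_le_one hw (hsq.const_mul _) fun x hx => ?_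
    gcongr
    exact le_of_abs_le (hwx x hx)

namespace IsTransportSolution

variable {v w : ℝ} {u ux ut : ℝ → ℝ → ℝ}

theorem continuousOn_uncurry_exp_mul_sq (hu : IsTransportSolution v u ux ut) :
    ContinuousOn (uncurry fun x t => exp (w * x) * u x t ^ 2) (Icc 0 1 ×ˢ Ici 0) :=
  (by fun_prop : Continuous fun q : ℝ × ℝ => exp (w * q.1)).continuousOn.mul
    (hu.continuousOn.pow 2)

theorem continuousOn_weightedEnergy (hu : IsTransportSolution v u ux ut) :
    ContinuousOn (weightedEnergy w u) (Ici 0) :=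
  continuousOn_intervalIntegral_of_continuousOn_uncurry zero_le_one
    hu.continuousOn_uncurry_exp_mul_sq

theorem hasDerivAt_weightedEnergy (hu : IsTransportSolution v u ux ut) {t : ℝ} (ht : 0 < t) :
    HasDerivAt (weightedEnergy w u)
      (v * (exp w * u 1 t ^ 2 - u 0 t ^ 2 - w * weightedEnergy w u t)) t := by
  have hderiv := hasDerivAt_intervalIntegral_of_continuousOn_uncurry zero_le_one
    (G := fun x t => exp (w * x) * u x t ^ 2) (Gt := fun x t => exp (w * x) * (2 * u x t * ut x t))
    hu.continuousOn_uncurry_exp_mul_sq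
    ((by fun_prop : Continuous fun q : ℝ × ℝ => exp (w * q.1)).continuousOn.mul
      ((continuousOn_const.mul hu.continuousOn).mul hu.continuousOn_t))
    (fun x hx s hs => (((hu.hasDerivWithinAt_t x hx s hs).pow 2).const_mul _).congr_deriv
      (by push_cast; ring)) ht
  refine hderiv.congr_deriv ?_
  rw [intervalIntegral.integral_congr (g := fun x => v * (exp (w * x) * (2 * u x t * ux x t)))
    fun x hx => by
      rw [uIcc_of_le zero_le_one] at hx
      simp only [hu.ut_eq x hx t ht.le]; ring,
    intervalIntegral.integral_const_mul, integral_exp_mul_mul_two_mul_deriv zero_le_one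
      (hu.continuousOn.uncurry_right t ht.le) (hu.continuousOn_x.uncurry_right t ht.le)
      fun x hx => hu.hasDerivWithinAt_x x hx t ht.le]
  simp [weightedEnergy]

end IsTransportSolution

theorem Finset.exists_pos_le_and_le {ι : Type*} (s : Finset ι) {w : ι → ℝ}
    (hw : ∀ j ∈ s, 0 < w j) : ∃ lo > 0, ∃ hi, ∀ j ∈ s, lo ≤ w j ∧ w j ≤ hi := by
  induction s using Finset.cons_induction with
  | empty => exact ⟨1, one_pos, 0, by simp⟩
  | cons a s ha ih =>
    obtain ⟨lo, hlo, hi, hs⟩ := ih fun j hj => hw j (Finset.mem_cons_of_mem hj)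
    refine ⟨min lo (w a), lt_min hlo (hw a (Finset.mem_cons_self a s)), max hi (w a), ?_⟩
    simp only [Finset.mem_cons, forall_eq_or_imp, min_le_iff, le_max_iff, le_refl, or_true,
      and_self, true_and]
    exact fun j hj => ⟨Or.inl (hs j hj).1, Or.inl (hs j hj).2⟩

theorem Finset.sum_mul_bounds {ι : Type*} {s : Finset ι} {ω y : ι → ℝ} {lo hi : ℝ}
    (hω : ∀ j ∈ s, lo ≤ ω j ∧ ω j ≤ hi) (hy : ∀ j ∈ s, 0 ≤ y j) :
    lo * ∑ j ∈ s, y j ≤ ∑ j ∈ s, ω j * y j ∧ ∑ j ∈ s, ω j * y j ≤ hi * ∑ j ∈ s, y j := by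
  rw [Finset.mul_sum, Finset.mul_sum]
  exact ⟨Finset.sum_le_sum fun j hj => mul_le_mul_of_nonneg_right (hω j hj).1 (hy j hj),
    Finset.sum_le_sum fun j hj => mul_le_mul_of_nonneg_right (hω j hj).2 (hy j hj)⟩

theorem sum_Icc_add_le_of_le_neg_two_mul_add {n : ℕ} (hn : 1 ≤ n) {a e : ℕ → ℝ} {r : ℝ}
    (ha : ∀ j, 1 ≤ j → j < n → a j ≤ -2 * e j + e (j + 1)) (han : a n ≤ -2 * e n + r) :
    ∑ j ∈ Finset.Icc 1 n, a j + e 1 ≤ -∑ j ∈ Finset.Icc 1 n, e j + r := by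
  induction n, hn using Nat.le_induction generalizing r with
  | base => simp only [Finset.Icc_self, Finset.sum_singleton]; linarith
  | succ n hn ih =>
    have := ih (fun j hj1 hjn => ha j hj1 (by omega)) (ha n hn (by omega))
    rw [Finset.sum_Icc_succ_top (by omega), Finset.sum_Icc_succ_top (by omega)]
    linarith

def cascadeField (n : ℕ) (κ : ℕ → ℝ) (f : ℝ) (u : ℕ → ℝ) (j : ℕ) : ℝ :=
  if j = n then -κ n * u n + f else -κ j * u j + u (j + 1)

structure IsCascadeSolution (n : ℕ) (κ : ℕ → ℝ) (f : ℝ → ℝ) (u : ℝ → ℕ → ℝ) : Prop where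
  hasDerivAt_of_lt : ∀ j, 1 ≤ j → j ≤ n - 1 → ∀ t, 0 ≤ t →
    HasDerivAt (fun s => u s j) (-κ j * u t j + u t (j + 1)) t
  hasDerivAt_last : ∀ t, 0 ≤ t → HasDerivAt (fun s => u s n) (-κ n * u t n + f t) t

/-- With `ω_j = κ_j κ_{j+1} ω_{j+1} / 2`, Young's inequality lets the dissipation `κ_j ω_j u_j²` of
each state absorb its coupling `2 ω_j u_j u_{j+1}` to the next one. -/
noncomputable def cascadeWeight (n : ℕ) (κ : ℕ → ℝ) (j : ℕ) : ℝ :=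
  ∏ k ∈ Finset.Ico j n, κ k * κ (k + 1) / 2

section Cascade

variable {n : ℕ} {κ : ℕ → ℝ}

theorem cascadeWeight_self : cascadeWeight n κ n = 1 := by
  simp [cascadeWeight]

theorem cascadeWeight_of_lt {j : ℕ} (hj : j < n) :
    cascadeWeight n κ j = κ j * κ (j + 1) / 2 * cascadeWeight n κ (j + 1) :=
  Finset.prod_eq_prod_Ico_succ_bot hj _

theorem cascadeWeight_pos (hκ : ∀ j, 1 ≤ j → j ≤ n → 0 < κ j) {j : ℕ} (hj : 1 ≤ j) :
    0 < cascadeWeight n κ j :=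
  Finset.prod_pos fun k hk => by
    obtain ⟨hjk, hkn⟩ := Finset.mem_Ico.1 hk
    have := hκ k (by omega) (by omega)
    have := hκ (k + 1) (by omega) (by omega)
    positivity

theorem sum_two_mul_cascadeField_le (hn : 1 ≤ n) (hκ : ∀ j, 1 ≤ j → j ≤ n - 1 → 2 < κ j)
    (hκn : 1 < κ n) (u : ℕ → ℝ) :
    ∑ j ∈ Finset.Icc 1 n, 2 * u j * cascadeField n κ 0 u j ≤ -∑ j ∈ Finset.Icc 1 n, u j ^ 2 := by
  have := sum_Icc_add_le_of_le_neg_two_mul_add hn (r := 0)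
    (a := fun j => 2 * u j * cascadeField n κ 0 u j) (e := fun j => u j ^ 2)
    (fun j hj1 hjn => by
      simp only [cascadeField, hjn.ne, if_false]
      nlinarith [hκ j hj1 (by omega), sq_nonneg (u j - u (j + 1)), sq_nonneg (u j)])
    (by simp only [cascadeField, if_true]; nlinarith [sq_nonneg (u n)])
  nlinarith [sq_nonneg (u 1)]

theorem sum_cascadeWeight_mul_cascadeField_le (hn : 1 ≤ n) (hκ : ∀ j, 1 ≤ j → j ≤ n → 0 < κ j)
    {μ : ℝ} (hμ : ∀ j, 1 ≤ j → j ≤ n → μ ≤ κ j) (f : ℝ) (u : ℕ → ℝ) :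
    ∑ j ∈ Finset.Icc 1 n, cascadeWeight n κ j * (2 * u j * cascadeField n κ f u j) ≤
      -(μ / 2) * ∑ j ∈ Finset.Icc 1 n, cascadeWeight n κ j * u j ^ 2 + f ^ 2 / κ n := by
  have hκn := hκ n hn le_rfl
  have hcascade := sum_Icc_add_le_of_le_neg_two_mul_add hn (r := f ^ 2 / κ n)
    (a := fun j => cascadeWeight n κ j * (2 * u j * cascadeField n κ f u j))
    (e := fun j => κ j * cascadeWeight n κ j / 2 * u j ^ 2)
    (fun j hj1 hjn => by
      have hκ' := hκ (j + 1) (by omega) hjn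
      have hω := cascadeWeight_pos hκ (n := n) (j := j + 1) (by omega)
      simp only [cascadeField, hjn.ne, if_false, cascadeWeight_of_lt hjn]
      nlinarith [mul_nonneg (mul_nonneg hκ'.le hω.le) (sq_nonneg (κ j * u j - u (j + 1)))])
    (by
      simp only [cascadeField, if_true, cascadeWeight_self]
      have : 0 ≤ (κ n * u n - f) ^ 2 / κ n := by positivity
      have : (κ n * u n - f) ^ 2 / κ n = κ n * u n ^ 2 - 2 * u n * f + f ^ 2 / κ n := by
        field_simp; ring
      nlinarith)
  have hdissipation : μ / 2 * ∑ j ∈ Finset.Icc 1 n, cascadeWeight n κ j * u j ^ 2 ≤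
      ∑ j ∈ Finset.Icc 1 n, κ j * cascadeWeight n κ j / 2 * u j ^ 2 := by
    rw [Finset.mul_sum]
    refine Finset.sum_le_sum fun j hj => ?_
    obtain ⟨hj1, hjn⟩ := Finset.mem_Icc.1 hj
    have := mul_nonneg (cascadeWeight_pos hκ hj1).le (sq_nonneg (u j))
    nlinarith [hμ j hj1 hjn]
  have he1 : 0 ≤ κ 1 * cascadeWeight n κ 1 / 2 * u 1 ^ 2 := by
    have := hκ 1 le_rfl hn
    have := cascadeWeight_pos hκ (n := n) le_rfl
    positivity
  linarith

end Cascade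

namespace IsCascadeSolution

variable {n : ℕ} {κ : ℕ → ℝ} {f : ℝ → ℝ} {u : ℝ → ℕ → ℝ} {t : ℝ}

theorem hasDerivAt (hu : IsCascadeSolution n κ f u) {j : ℕ} (hj1 : 1 ≤ j) (hjn : j ≤ n)
    (ht : 0 ≤ t) : HasDerivAt (fun s => u s j) (cascadeField n κ (f t) (u t) j) t := by
  unfold cascadeField
  split_ifs with hj
  · subst hj; exact hu.hasDerivAt_last t ht
  · exact hu.hasDerivAt_of_lt j hj1 (by omega) t ht

theorem hasDerivAt_sum (hu : IsCascadeSolution n κ f u) (ω : ℕ → ℝ) (ht : 0 ≤ t) :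
    HasDerivAt (fun s => ∑ j ∈ Finset.Icc 1 n, ω j * u s j ^ 2)
      (∑ j ∈ Finset.Icc 1 n, ω j * (2 * u t j * cascadeField n κ (f t) (u t) j)) t :=
  HasDerivAt.fun_sum fun j hj =>
    (((hu.hasDerivAt (Finset.mem_Icc.1 hj).1 (Finset.mem_Icc.1 hj).2 ht).fun_pow 2).const_mul
      (ω j)).congr_deriv (by push_cast; ring)

theorem hasDerivAt_sum_sq_le (hu : IsCascadeSolution n κ (fun _ => 0) u) (hn : 1 ≤ n)
    (hκ : ∀ j, 1 ≤ j → j ≤ n - 1 → 2 < κ j) (hκn : 1 < κ n) (ht : 0 ≤ t) :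
    ∃ D, HasDerivAt (fun s => ∑ j ∈ Finset.Icc 1 n, u s j ^ 2) D t ∧
      D ≤ -∑ j ∈ Finset.Icc 1 n, u t j ^ 2 := by
  have hderiv := hu.hasDerivAt_sum (fun _ => 1) ht
  simp only [one_mul] at hderiv
  exact ⟨_, hderiv, sum_two_mul_cascadeField_le hn hκ hκn (u t)⟩

theorem hasDerivAt_sum_cascadeWeight_le (hu : IsCascadeSolution n κ f u) (hn : 1 ≤ n)
    (hκ : ∀ j, 1 ≤ j → j ≤ n → 0 < κ j) {μ : ℝ} (hμ : ∀ j, 1 ≤ j → j ≤ n → μ ≤ κ j)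
    (ht : 0 ≤ t) :
    ∃ D, HasDerivAt (fun s => ∑ j ∈ Finset.Icc 1 n, cascadeWeight n κ j * u s j ^ 2) D t ∧
      D ≤ -(μ / 2) * ∑ j ∈ Finset.Icc 1 n, cascadeWeight n κ j * u t j ^ 2 + f t ^ 2 / κ n :=
  ⟨_, hu.hasDerivAt_sum _ ht, sum_cascadeWeight_mul_cascadeField_le hn hκ hμ (f t) (u t)⟩

end IsCascadeSolution

theorem le_mul_exp_of_hasDerivAt_le {V : ℝ → ℝ} {σ : ℝ} (hV : ContinuousOn V (Ici 0))
    (hV' : ∀ t > 0, ∃ D, HasDerivAt V D t ∧ D ≤ -σ * V t) {t : ℝ} (ht : 0 ≤ t) :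
    V t ≤ V 0 * exp (-σ * t) := by
  choose! D hD hDle using hV'
  have hanti : AntitoneOn (fun s => V s * exp (σ * s)) (Ici 0) := by
    refine antitoneOn_of_hasDerivWithinAt_nonpos (convex_Ici 0)
      (hV.mul (by fun_prop : Continuous fun s => exp (σ * s)).continuousOn)
      (f' := fun s => D s * exp (σ * s) + V s * (exp (σ * s) * σ)) (fun s hs => ?_) fun s hs => ?_
    · rw [interior_Ici] at hs
      exact ((hD s hs).mul ((hasDerivAt_id s).const_mul σ).exp |>.congr_deriv (by simp)
        ).hasDerivWithinAt
    · rw [interior_Ici] at hs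
      nlinarith [hDle s hs, exp_pos (σ * s)]
  have : V t * exp (σ * t) ≤ V 0 := by simpa using hanti self_mem_Ici ht ht
  calc V t = V t * exp (σ * t) * exp (-σ * t) := by
        rw [mul_assoc, ← exp_add, neg_mul, add_neg_cancel, exp_zero, mul_one]
    _ ≤ V 0 * exp (-σ * t) := by gcongr

theorem div_two_mul_add_one_mul_le {c x : ℝ} (hc : 0 ≤ c) (hx : 0 ≤ x) :
    c / (2 * (x + 1)) * x ≤ c / 2 := by
  rw [div_mul_eq_mul_div, div_le_div_iff₀ (by positivity) two_pos]
  nlinarith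

/-- The coefficient of the `h`-energy absorbs the input `q2 e h_1(t)²` that `β(1,t) = h_1(t)` feeds
into the `β`-energy; the coefficients of the `α`- and `Z`-energies are small enough that their
inputs `q1 p² β(0,t)²` and `b² β(0,t)² / κ_n` are each absorbed by half of the dissipation
`q2 β(0,t)²` of the `β`-energy. -/
noncomputable def targetLyapunov (m n : ℕ) (q1 q2 p b : ℝ) (κ : ℕ → ℝ) (α β : ℝ → ℝ → ℝ)
    (h Z : ℝ → ℕ → ℝ) (t : ℝ) : ℝ :=
  2 * q2 * exp 1 * ∑ i ∈ Finset.Icc 1 m, h t i ^ 2 + weightedEnergy 1 β t +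
    q2 / (2 * (q1 * p ^ 2 + 1)) * weightedEnergy (-1) α t +
    q2 / (2 * (b ^ 2 / κ n + 1)) * ∑ j ∈ Finset.Icc 1 n, cascadeWeight n κ j * Z t j ^ 2

section TargetSystem

variable {m n : ℕ} {q1 q2 p b μ v v' : ℝ} {κ c : ℕ → ℝ} {f g : ℝ → ℝ}
  {Z h : ℝ → ℕ → ℝ} {α αx αt β βx βt : ℝ → ℝ → ℝ}

theorem continuousOn_targetLyapunov (hZ : IsCascadeSolution n κ f Z)
    (hα : IsTransportSolution v α αx αt) (hβ : IsTransportSolution v' β βx βt)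
    (hh : IsCascadeSolution m c g h) :
    ContinuousOn (targetLyapunov m n q1 q2 p b κ α β h Z) (Ici 0) := by
  have hH : ContinuousOn (fun s => ∑ i ∈ Finset.Icc 1 m, h s i ^ 2) (Ici 0) := fun t ht => by
    simpa using (hh.hasDerivAt_sum (fun _ => 1) ht).continuousAt.continuousWithinAt
  have hE : ContinuousOn (fun s => ∑ j ∈ Finset.Icc 1 n, cascadeWeight n κ j * Z s j ^ 2)
      (Ici 0) := fun t ht => (hZ.hasDerivAt_sum _ ht).continuousAt.continuousWithinAt
  exact (((continuousOn_const.mul hH).add hβ.continuousOn_weightedEnergy).add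
    (continuousOn_const.mul hα.continuousOn_weightedEnergy)).add (continuousOn_const.mul hE)

theorem hasDerivAt_targetLyapunov_le (hm : 1 ≤ m) (hn : 1 ≤ n) (hq1 : 0 ≤ q1) (hq2 : 0 ≤ q2)
    (hκ : ∀ j, 1 ≤ j → j ≤ n → 0 < κ j) (hμ : ∀ j, 1 ≤ j → j ≤ n → μ ≤ κ j)
    (hc : ∀ i, 1 ≤ i → i ≤ m - 1 → 2 < c i) (hcm : 1 < c m)
    (hZ : IsCascadeSolution n κ (fun t => b * β 0 t) Z) (hα : IsTransportSolution (-q1) α αx αt)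
    (hβ : IsTransportSolution q2 β βx βt) (hα0 : ∀ t ∈ Ici (0 : ℝ), α 0 t = p * β 0 t)
    (hβ1 : ∀ t ∈ Ici (0 : ℝ), β 1 t = h t 1) (hh : IsCascadeSolution m c (fun _ => 0) h)
    {t : ℝ} (ht : 0 < t) :
    ∃ D, HasDerivAt (targetLyapunov m n q1 q2 p b κ α β h Z) D t ∧
      D ≤ -min (min (1 / 2) q2) (min q1 (μ / 2)) * targetLyapunov m n q1 q2 p b κ α β h Z t := by
  obtain ⟨DH, hDH, hDHle⟩ := hh.hasDerivAt_sum_sq_le hm hc hcm ht.le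
  obtain ⟨DZ, hDZ, hDZle⟩ := hZ.hasDerivAt_sum_cascadeWeight_le hn hκ hμ ht.le
  refine ⟨_, (((hDH.const_mul _).add (hβ.hasDerivAt_weightedEnergy ht)).add
    ((hα.hasDerivAt_weightedEnergy ht).const_mul _)).add (hDZ.const_mul _), ?_⟩
  have hκn := hκ n hn le_rfl
  have hh1 : h t 1 ^ 2 ≤ ∑ i ∈ Finset.Icc 1 m, h t i ^ 2 :=
    Finset.single_le_sum (fun i _ => sq_nonneg (h t i)) (Finset.mem_Icc.2 ⟨le_rfl, hm⟩)
  have hcoefα := div_two_mul_add_one_mul_le hq2 (by positivity : 0 ≤ q1 * p ^ 2)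
  have hcoefZ := div_two_mul_add_one_mul_le hq2 (by positivity : 0 ≤ b ^ 2 / κ n)
  have hH := Finset.sum_nonneg fun i (_ : i ∈ Finset.Icc 1 m) => sq_nonneg (h t i)
  have hE := Finset.sum_nonneg fun j (hj : j ∈ Finset.Icc 1 n) =>
    mul_nonneg (cascadeWeight_pos hκ (Finset.mem_Icc.1 hj).1).le (sq_nonneg (Z t j))
  have hIβ := weightedEnergy_nonneg 1 β t
  have hIα := weightedEnergy_nonneg (-1) α t
  rw [hβ1 t ht.le, hα0 t ht.le]
  unfold targetLyapunov
  set σ := min (min (1 / 2) q2) (min q1 (μ / 2))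
  set aα := q2 / (2 * (q1 * p ^ 2 + 1))
  set aZ := q2 / (2 * (b ^ 2 / κ n + 1))
  have haH : 0 ≤ 2 * q2 * exp 1 := by positivity
  have haα : 0 ≤ aα := by positivity
  have haZ : 0 ≤ aZ := by positivity
  have hσH : σ * (2 * q2 * exp 1 * _) ≤ 1 / 2 * (2 * q2 * exp 1 * _) :=
    mul_le_mul_of_nonneg_right ((min_le_left _ _).trans (min_le_left _ _)) (mul_nonneg haH hH)
  have hσβ : σ * weightedEnergy 1 β t ≤ q2 * weightedEnergy 1 β t :=
    mul_le_mul_of_nonneg_right ((min_le_left _ _).trans (min_le_right _ _)) hIβ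
  have hσα : σ * (aα * weightedEnergy (-1) α t) ≤ q1 * (aα * weightedEnergy (-1) α t) :=
    mul_le_mul_of_nonneg_right ((min_le_right _ _).trans (min_le_left _ _)) (mul_nonneg haα hIα)
  have hσZ : σ * (aZ * _) ≤ μ / 2 * (aZ * _) :=
    mul_le_mul_of_nonneg_right ((min_le_right _ _).trans (min_le_right _ _)) (mul_nonneg haZ hE)
  have hHdiss := mul_le_mul_of_nonneg_left hDHle haH
  rw [show (b * β 0 t) ^ 2 / κ n = b ^ 2 / κ n * β 0 t ^ 2 by ring] at hDZle
  have hZdiss := mul_le_mul_of_nonneg_left hDZle haZ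
  have hinput := mul_le_mul_of_nonneg_left hh1 (by positivity : 0 ≤ q2 * exp 1)
  have hβ0α := mul_le_mul_of_nonneg_right hcoefα (sq_nonneg (β 0 t))
  have hβ0Z := mul_le_mul_of_nonneg_right hcoefZ (sq_nonneg (β 0 t))
  have hα1 : 0 ≤ aα * q1 * (exp (-1) * α 1 t ^ 2) := by positivity
  linarith

theorem exists_targetLyapunov_equiv (hn : 1 ≤ n) (hq1 : 0 ≤ q1) (hq2 : 0 < q2)
    (hκ : ∀ j, 1 ≤ j → j ≤ n → 0 < κ j) :
    ∃ k > 0, ∃ K, k ≤ K ∧ ∀ (α β : ℝ → ℝ → ℝ) (h Z : ℝ → ℕ → ℝ) (t : ℝ),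
      ContinuousOn (fun x => α x t) (Icc 0 1) → ContinuousOn (fun x => β x t) (Icc 0 1) →
      k * targetNorm m n α β h Z t ≤ targetLyapunov m n q1 q2 p b κ α β h Z t ∧
        targetLyapunov m n q1 q2 p b κ α β h Z t ≤ K * targetNorm m n α β h Z t := by
  obtain ⟨lo, hlo, hi, hω⟩ := (Finset.Icc 1 n).exists_pos_le_and_le fun j hj =>
    cascadeWeight_pos hκ (κ := κ) (Finset.mem_Icc.1 hj).1
  have hκn := hκ n hn le_rfl
  set aH := 2 * q2 * exp 1
  set aα := q2 / (2 * (q1 * p ^ 2 + 1))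
  set aZ := q2 / (2 * (b ^ 2 / κ n + 1))
  have haH : 0 < aH := by positivity
  have haα : 0 < aα := by positivity
  have haZ : 0 < aZ := by positivity
  set k := min (min aH (exp (-1))) (min (aα * exp (-1)) (aZ * lo))
  set K := max (max aH (exp 1)) (max (aα * exp 1) (aZ * hi))
  have hkH : k ≤ aH := (min_le_left _ _).trans (min_le_left _ _)
  have hkβ : k ≤ exp (-1) := (min_le_left _ _).trans (min_le_right _ _)
  have hkα : k ≤ aα * exp (-1) := (min_le_right _ _).trans (min_le_left _ _)
  have hkZ : k ≤ aZ * lo := (min_le_right _ _).trans (min_le_right _ _)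
  have hKH : aH ≤ K := (le_max_left _ _).trans (le_max_left _ _)
  have hKβ : exp 1 ≤ K := (le_max_right _ _).trans (le_max_left _ _)
  have hKα : aα * exp 1 ≤ K := (le_max_left _ _).trans (le_max_right _ _)
  have hKZ : aZ * hi ≤ K := (le_max_right _ _).trans (le_max_right _ _)
  refine ⟨k, by positivity, K, hkH.trans hKH, fun α β h Z t hα hβ => ?_⟩
  obtain ⟨hβlo, hβhi⟩ := weightedEnergy_bounds 1 hβ
  obtain ⟨hαlo, hαhi⟩ := weightedEnergy_bounds (-1) hα
  rw [abs_one] at hβlo hβhi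
  rw [abs_neg, abs_one] at hαlo hαhi
  obtain ⟨hZlo, hZhi⟩ := Finset.sum_mul_bounds hω fun j _ => sq_nonneg (Z t j)
  have hβ2 : 0 ≤ ∫ x in (0 : ℝ)..1, β x t ^ 2 :=
    intervalIntegral.integral_nonneg zero_le_one fun x _ => sq_nonneg (β x t)
  have hα2 : 0 ≤ ∫ x in (0 : ℝ)..1, α x t ^ 2 :=
    intervalIntegral.integral_nonneg zero_le_one fun x _ => sq_nonneg (α x t)
  have hH := Finset.sum_nonneg fun i (_ : i ∈ Finset.Icc 1 m) => sq_nonneg (h t i)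
  have hZ := Finset.sum_nonneg fun j (_ : j ∈ Finset.Icc 1 n) => sq_nonneg (Z t j)
  unfold targetNorm targetLyapunov
  constructor
  · linarith [mul_le_mul_of_nonneg_right hkH hH, mul_le_mul_of_nonneg_right hkβ hβ2,
      mul_le_mul_of_nonneg_right hkα hα2, mul_le_mul_of_nonneg_right hkZ hZ,
      mul_le_mul_of_nonneg_left hαlo haα.le, mul_le_mul_of_nonneg_left hZlo haZ.le]
  · linarith [mul_le_mul_of_nonneg_right hKH hH, mul_le_mul_of_nonneg_right hKβ hβ2,
      mul_le_mul_of_nonneg_right hKα hα2, mul_le_mul_of_nonneg_right hKZ hZ,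
      mul_le_mul_of_nonneg_left hαhi haα.le, mul_le_mul_of_nonneg_left hZhi haZ.le]

theorem exists_targetLyapunov_decay (hm : 1 ≤ m) (hn : 1 ≤ n) (hq1 : 0 < q1) (hq2 : 0 < q2)
    (hκ : ∀ j, 1 ≤ j → j ≤ n → 0 < κ j) (hc : ∀ i, 1 ≤ i → i ≤ m - 1 → 2 < c i)
    (hcm : 1 < c m) :
    ∃ σ > 0, ∀ {Z h : ℝ → ℕ → ℝ} {α αx αt β βx βt : ℝ → ℝ → ℝ},
      IsCascadeSolution n κ (fun t => b * β 0 t) Z → IsTransportSolution (-q1) α αx αt →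
      IsTransportSolution q2 β βx βt → (∀ t ∈ Ici (0 : ℝ), α 0 t = p * β 0 t) →
      (∀ t ∈ Ici (0 : ℝ), β 1 t = h t 1) → IsCascadeSolution m c (fun _ => 0) h →
      ∀ t ≥ 0, targetLyapunov m n q1 q2 p b κ α β h Z t ≤
        targetLyapunov m n q1 q2 p b κ α β h Z 0 * exp (-σ * t) := by
  obtain ⟨μ, hμ, _, hκμ⟩ := (Finset.Icc 1 n).exists_pos_le_and_le fun j hj =>
    hκ j (Finset.mem_Icc.1 hj).1 (Finset.mem_Icc.1 hj).2
  refine ⟨_, lt_min (lt_min one_half_pos hq2) (lt_min hq1 (half_pos hμ)),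
    fun hZ hα hβ hα0 hβ1 hh t ht => le_mul_exp_of_hasDerivAt_le
      (continuousOn_targetLyapunov hZ hα hβ hh) (fun s hs => ?_) ht⟩
  exact hasDerivAt_targetLyapunov_le hm hn hq1.le hq2.le hκ
    (fun j hj1 hjn => (hκμ j (Finset.mem_Icc.2 ⟨hj1, hjn⟩)).1) hc hcm hZ hα hβ hα0 hβ1 hh hs

end TargetSystem

theorem target_system_exponential_stability_general
    (m n : ℕ) (hm : 1 ≤ m) (hn : 1 ≤ n)
    (q1 q2 b : ℝ) (hq1 : 0 < q1) (hq2 : 0 < q2) (p : ℝ)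
    (κ : ℕ → ℝ) (hκ : ∀ j, 1 ≤ j → j ≤ n → 0 < κ j)
    (c : ℕ → ℝ) (hc : ∀ i, 1 ≤ i → i ≤ m - 1 → 2 < c i) (hcm : 1 < c m) :
    ∃ Υ : ℝ, 1 ≤ Υ ∧ ∃ σ0 : ℝ, 0 < σ0 ∧
      ∀ (Z : ℝ → ℕ → ℝ) (α αx αt β βx βt : ℝ → ℝ → ℝ) (h : ℝ → ℕ → ℝ),
        -- distal ODE Ż = A_Z Z + B β(0,t):
        (∀ j, 1 ≤ j → j ≤ n - 1 → ∀ t, 0 ≤ t →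
          HasDerivAt (fun s => Z s j) (-κ j * Z t j + Z t (j + 1)) t) →
        (∀ t, 0 ≤ t →
          HasDerivAt (fun s => Z s n) (-κ n * Z t n + b * β 0 t) t) →
        -- α is continuously differentiable and satisfies α_t = -q1 α_x:
        ContinuousOn (fun q : ℝ × ℝ => α q.1 q.2) (Icc 0 1 ×ˢ Ici 0) →
        (∀ x ∈ Icc (0:ℝ) 1, ∀ t ∈ Ici (0:ℝ),
          HasDerivWithinAt (fun x' => α x' t) (αx x t) (Icc 0 1) x) →
        (∀ x ∈ Icc (0:ℝ) 1, ∀ t ∈ Ici (0:ℝ),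
          HasDerivWithinAt (fun t' => α x t') (αt x t) (Ici 0) t) →
        ContinuousOn (fun q : ℝ × ℝ => αx q.1 q.2) (Icc 0 1 ×ˢ Ici 0) →
        ContinuousOn (fun q : ℝ × ℝ => αt q.1 q.2) (Icc 0 1 ×ˢ Ici 0) →
        (∀ x ∈ Icc (0:ℝ) 1, ∀ t ∈ Ici (0:ℝ), αt x t = -q1 * αx x t) →
        -- β is continuously differentiable and satisfies β_t = q2 β_x:
        ContinuousOn (fun q : ℝ × ℝ => β q.1 q.2) (Icc 0 1 ×ˢ Ici 0) →
        (∀ x ∈ Icc (0:ℝ) 1, ∀ t ∈ Ici (0:ℝ),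
          HasDerivWithinAt (fun x' => β x' t) (βx x t) (Icc 0 1) x) →
        (∀ x ∈ Icc (0:ℝ) 1, ∀ t ∈ Ici (0:ℝ),
          HasDerivWithinAt (fun t' => β x t') (βt x t) (Ici 0) t) →
        ContinuousOn (fun q : ℝ × ℝ => βx q.1 q.2) (Icc 0 1 ×ˢ Ici 0) →
        ContinuousOn (fun q : ℝ × ℝ => βt q.1 q.2) (Icc 0 1 ×ˢ Ici 0) →
        (∀ x ∈ Icc (0:ℝ) 1, ∀ t ∈ Ici (0:ℝ), βt x t = q2 * βx x t) →
        -- boundary conditions α(0,t) = p β(0,t), β(1,t) = h_1(t):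
        (∀ t ∈ Ici (0:ℝ), α 0 t = p * β 0 t) →
        (∀ t ∈ Ici (0:ℝ), β 1 t = h t 1) →
        -- proximal ODE chain:
        (∀ i, 1 ≤ i → i ≤ m - 1 → ∀ t, 0 ≤ t →
          HasDerivAt (fun s => h s i) (-c i * h t i + h t (i + 1)) t) →
        (∀ t, 0 ≤ t → HasDerivAt (fun s => h s m) (-c m * h t m) t) →
        ∀ t, 0 ≤ t →
          targetNorm m n α β h Z t ≤
            Υ * targetNorm m n α β h Z 0 * Real.exp (-σ0 * t) := by
  obtain ⟨k, hk, K, hkK, hequiv⟩ :=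
    exists_targetLyapunov_equiv (m := m) (p := p) (b := b) hn hq1.le hq2 hκ
  obtain ⟨σ, hσ, hdecay⟩ := exists_targetLyapunov_decay (p := p) (b := b) hm hn hq1 hq2 hκ hc hcm
  refine ⟨K / k, (one_le_div hk).2 hkK, σ, hσ, fun Z α αx αt β βx βt h hZ hZn hα hαx hαt hαxc
    hαtc hαeq hβ hβx hβt hβxc hβtc hβeq hα0 hβ1 hh hhm t ht => ?_⟩
  have hequiv' s (hs : 0 ≤ s) :=
    hequiv α β h Z s (hα.uncurry_right s hs) (hβ.uncurry_right s hs)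
  have hV := hdecay ⟨hZ, hZn⟩ ⟨hα, hαx, hαt, hαxc, hαtc, hαeq⟩ ⟨hβ, hβx, hβt, hβxc, hβtc, hβeq⟩
    hα0 hβ1 ⟨hh, fun s hs => by simpa using hhm s hs⟩ t ht
  set V := targetLyapunov m n q1 q2 p b κ α β h Z
  calc targetNorm m n α β h Z t ≤ V t / k := (le_div_iff₀' hk).2 (hequiv' t ht).1
    _ ≤ V 0 * exp (-σ * t) / k := by gcongr
    _ ≤ K * targetNorm m n α β h Z 0 * exp (-σ * t) / k := by
      gcongr; exact (hequiv' 0 le_rfl).2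
    _ = K / k * targetNorm m n α β h Z 0 * exp (-σ * t) := by ring

/-- Exponential stability of the backstepping target system:
distal chain `Ż = A_Z Z + B β(0,t)` (componentwise `Z_j' = -κ_j Z_j + Z_{j+1}`,
`Z_n' = -κ_n Z_n + b β(0,t)`), transport PDEs `α_t = -q1 α_x`, `β_t = q2 β_x`
with `α(0,t) = p β(0,t)`, `β(1,t) = h_1(t)`, and proximal chain
`h_i' = -c_i h_i + h_{i+1}`, `h_m' = -c_m h_m`.  There are constants `Υ ≥ 1`,
`σ0 > 0`, depending only on the parameters and not on the solution, with
`Ξ(t) ≤ Υ Ξ(0) e^{-σ0 t}`. -/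
theorem target_system_exponential_stability
    (m n : ℕ) (hm : 1 ≤ m) (hn : 1 ≤ n)
    (q1 q2 b : ℝ) (hq1 : 0 < q1) (hq2 : 0 < q2) (hb : 0 < b) (p : ℝ)
    (κ : ℕ → ℝ) (hκ : ∀ j, 1 ≤ j → j ≤ n → 0 < κ j)
    (c : ℕ → ℝ) (hc : ∀ i, 1 ≤ i → i ≤ m - 1 → 2 < c i) (hcm : 1 < c m) :
    ∃ Υ : ℝ, 1 ≤ Υ ∧ ∃ σ0 : ℝ, 0 < σ0 ∧
      ∀ (Z : ℝ → ℕ → ℝ) (α αx αt β βx βt : ℝ → ℝ → ℝ) (h : ℝ → ℕ → ℝ),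
        -- distal ODE Ż = A_Z Z + B β(0,t):
        (∀ j, 1 ≤ j → j ≤ n - 1 → ∀ t, 0 ≤ t →
          HasDerivAt (fun s => Z s j) (-κ j * Z t j + Z t (j + 1)) t) →
        (∀ t, 0 ≤ t →
          HasDerivAt (fun s => Z s n) (-κ n * Z t n + b * β 0 t) t) →
        -- α is continuously differentiable and satisfies α_t = -q1 α_x:
        ContinuousOn (fun q : ℝ × ℝ => α q.1 q.2) (Icc 0 1 ×ˢ Ici 0) →
        (∀ x ∈ Icc (0:ℝ) 1, ∀ t ∈ Ici (0:ℝ),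
          HasDerivWithinAt (fun x' => α x' t) (αx x t) (Icc 0 1) x) →
        (∀ x ∈ Icc (0:ℝ) 1, ∀ t ∈ Ici (0:ℝ),
          HasDerivWithinAt (fun t' => α x t') (αt x t) (Ici 0) t) →
        ContinuousOn (fun q : ℝ × ℝ => αx q.1 q.2) (Icc 0 1 ×ˢ Ici 0) →
        ContinuousOn (fun q : ℝ × ℝ => αt q.1 q.2) (Icc 0 1 ×ˢ Ici 0) →
        (∀ x ∈ Icc (0:ℝ) 1, ∀ t ∈ Ici (0:ℝ), αt x t = -q1 * αx x t) →
        -- β is continuously differentiable and satisfies β_t = q2 β_x: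
        ContinuousOn (fun q : ℝ × ℝ => β q.1 q.2) (Icc 0 1 ×ˢ Ici 0) →
        (∀ x ∈ Icc (0:ℝ) 1, ∀ t ∈ Ici (0:ℝ),
          HasDerivWithinAt (fun x' => β x' t) (βx x t) (Icc 0 1) x) →
        (∀ x ∈ Icc (0:ℝ) 1, ∀ t ∈ Ici (0:ℝ),
          HasDerivWithinAt (fun t' => β x t') (βt x t) (Ici 0) t) →
        ContinuousOn (fun q : ℝ × ℝ => βx q.1 q.2) (Icc 0 1 ×ˢ Ici 0) →
        ContinuousOn (fun q : ℝ × ℝ => βt q.1 q.2) (Icc 0 1 ×ˢ Ici 0) →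
        (∀ x ∈ Icc (0:ℝ) 1, ∀ t ∈ Ici (0:ℝ), βt x t = q2 * βx x t) →
        -- boundary conditions α(0,t) = p β(0,t), β(1,t) = h_1(t):
        (∀ t ∈ Ici (0:ℝ), α 0 t = p * β 0 t) →
        (∀ t ∈ Ici (0:ℝ), β 1 t = h t 1) →
        -- proximal ODE chain:
        (∀ i, 1 ≤ i → i ≤ m - 1 → ∀ t, 0 ≤ t →
          HasDerivAt (fun s => h s i) (-c i * h t i + h t (i + 1)) t) →
        (∀ t, 0 ≤ t → HasDerivAt (fun s => h s m) (-c m * h t m) t) →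
        ∀ t, 0 ≤ t →
          targetNorm m n α β h Z t ≤
            Υ * targetNorm m n α β h Z 0 * Real.exp (-σ0 * t) :=
  target_system_exponential_stability_general m n hm hn q1 q2 b hq1 hq2 p κ hκ c hc hcm
end

section
/- Let n ≥ 1 be an integer, l_1, …, l_n ∈ ℝ, b > 0, and κ_1, …, κ_n > 0. Let A be the n×n matrix whose (i, i+1) entries equal 1 for 1 ≤ i ≤ n−1, whose last row is (l_1, …, l_n), and whose remaining entries are zero, and let B = (0, …, 0, b)ᵀ ∈ ℝⁿ. Let I ⊆ ℝ be an interval, w₀ : I → ℝ continuous, and Y = (y_1, …, y_n) : I → ℝⁿ continuously differentiable with Ẏ(t) = A Y(t) + B w₀(t) for all t ∈ I. Define linear functions g_0 = 0 and g_i(y_1,…,y_i) = −κ_i(y_i − g_{i−1}(y_1,…,y_{i−1})) + Σ_{j=1}^{i−1} (∂g_{i−1}/∂y_j) y_{j+1} for 1 ≤ i ≤ n−1 (with constant coefficients ∂g_{i−1}/∂y_j), and set z_i(t) = y_i(t) − g_{i−1}(y_1(t),…,y_{i−1}(t)), Z = (z_1, …, z_n). Then for all t ∈ I, Ż(t) =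 A_Z Z(t) + B w₀(t) − B Kᵀ Y(t), where A_Z is the n×n matrix with −κ_i in the (i,i) entries, 1 in the (i,i+1) entries and zeros elsewhere, and Kᵀ is the constant row vector (1/b)·[ −l_1 + κ_n ∂g_{n−1}/∂y_1, −l_2 + ∂g_{n−1}/∂y_1 + κ_n ∂g_{n−1}/∂y_2, …, −l_{n−1} + ∂g_{n−1}/∂y_{n−2} + κ_n ∂g_{n−1}/∂y_{n−1}, −l_n + ∂g_{n−1}/∂y_{n−1} − κ_n ]. -/
/-- The backstepping transformation functions `g_i` (equations (12)–(14)):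
`g_0 = 0`,
`g_i(y) = -κ_i (y_i - g_{i-1}(y)) + Σ_{j=1}^{i-1} (∂g_{i-1}/∂y_j) y_{j+1}`;
the constant coefficient `∂g_{i-1}/∂y_j` of the linear function `g_{i-1}` is
its value on the `j`-th standard basis vector. -/
noncomputable def gBack (κ : ℕ → ℝ) : ℕ → (ℕ → ℝ) → ℝ
  | 0, _ => 0
  | i + 1, y =>
      -κ (i + 1) * (y (i + 1) - gBack κ i y) +
        ∑ j ∈ Finset.Icc 1 i,
          gBack κ i (fun k => if k = j then 1 else 0) * y (j + 1)

/-!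
Each `g_i` is a linear function of `y_1, …, y_i` with constant coefficients, so along a
trajectory `d/dt g_{i-1}(Y) = g_{i-1}(Ẏ) = g_{i-1}(y_2, …, y_i)`: only the states whose
derivative is the next state enter. The recursion defining `g_i` says precisely
`g_i(y) = -κ_i (y_i - g_{i-1}(y)) + g_{i-1}(y_2, …, y_i)`, which turns
`ż_i = y_{i+1} - g_{i-1}(y_2, …, y_i)` into `-κ_i z_i + z_{i+1}`. In the last row
`ẏ_n = Σ l_j y_j + b w₀`, and `b Kᵀ Y` is exactly the sum of the leftover terms.
-/

open Finset

lemma sum_Icc_ite_two_le {M : Type*} [AddCommMonoid M] (m : ℕ) (f : ℕ → M) :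
    ∑ j ∈ Icc 1 (m + 1), (if 2 ≤ j then f j else 0) = ∑ j ∈ Icc 1 m, f (j + 1) := by
  induction m with
  | zero => simp
  | succ m ih =>
    rw [sum_Icc_succ_top (by omega), ih, sum_Icc_succ_top (by omega), if_pos (by omega)]

section

variable (κ : ℕ → ℝ)

lemma gBack_add : ∀ (i : ℕ) (u v : ℕ → ℝ), gBack κ i (u + v) = gBack κ i u + gBack κ i v
  | 0, _, _ => by simp [gBack]
  | i + 1, u, v => by
    simp only [gBack, gBack_add i u v, Pi.add_apply, mul_add, sum_add_distrib]
    ring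

lemma gBack_smul (a : ℝ) : ∀ (i : ℕ) (u : ℕ → ℝ), gBack κ i (a • u) = a • gBack κ i u
  | 0, _ => by simp [gBack]
  | i + 1, u => by
    simp only [gBack, gBack_smul a i u, Pi.smul_apply, smul_eq_mul, mul_add, mul_sum]
    ring_nf

noncomputable def gBackLinearMap (i : ℕ) : (ℕ → ℝ) →ₗ[ℝ] ℝ where
  toFun := gBack κ i
  map_add' := gBack_add κ i
  map_smul' a := gBack_smul κ a i

lemma gBack_congr : ∀ (i : ℕ) (u v : ℕ → ℝ), (∀ k, 1 ≤ k → k ≤ i → u k = v k) →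
    gBack κ i u = gBack κ i v
  | 0, _, _, _ => rfl
  | i + 1, u, v, h => by
    simp only [gBack]
    rw [gBack_congr i u v fun k h1 h2 => h k h1 (by omega), h (i + 1) (by omega) le_rfl]
    refine congrArg _ (sum_congr rfl fun j hj => ?_)
    rw [mem_Icc] at hj
    rw [h (j + 1) (by omega) (by omega)]

lemma gBack_eq_sum (i : ℕ) (y : ℕ → ℝ) :
    gBack κ i y = ∑ j ∈ Icc 1 i, gBack κ i (fun k => if k = j then 1 else 0) * y j := by
  calc gBack κ i y
      = gBackLinearMap κ i (∑ j ∈ Icc 1 i, y j • fun k => if k = j then 1 else 0) := by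
        refine gBack_congr κ i _ _ fun k hk1 hki => ?_
        simp [Finset.sum_apply, hk1, hki]
    _ = _ := by simp [map_sum, gBackLinearMap, mul_comm]

lemma gBack_succ_eq_shift (i : ℕ) (y : ℕ → ℝ) :
    gBack κ (i + 1) y =
      -κ (i + 1) * (y (i + 1) - gBack κ i y) + gBack κ i (fun k => y (k + 1)) := by
  rw [gBack_eq_sum κ i (fun k => y (k + 1))]
  rfl

lemma hasDerivAt_gBack {i : ℕ} {Y : ℝ → ℕ → ℝ} {Y' : ℕ → ℝ} {t : ℝ}
    (hY : ∀ k, 1 ≤ k → k ≤ i → HasDerivAt (fun s => Y s k) (Y' k) t) :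
    HasDerivAt (fun s => gBack κ i (Y s)) (gBack κ i Y') t := by
  rw [show (fun s => gBack κ i (Y s)) = fun s => ∑ j ∈ Icc 1 i,
      gBack κ i (fun k => if k = j then 1 else 0) * Y s j from
    funext fun s => gBack_eq_sum κ i (Y s), gBack_eq_sum κ i Y']
  exact HasDerivAt.fun_sum fun j hj => (hY j (mem_Icc.1 hj).1 (mem_Icc.1 hj).2).const_mul _

end

lemma mul_sum_gain_eq {n : ℕ} (hn : 1 ≤ n) (l : ℕ → ℝ) {b : ℝ} (hb : b ≠ 0) (κ : ℕ → ℝ)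
    {K : ℕ → ℝ}
    (hK : ∀ j, 1 ≤ j → j ≤ n → K j =
      (1 / b) * (-l j
        + (if 2 ≤ j then gBack κ (n - 1) (fun k => if k = j - 1 then 1 else 0)
            else 0)
        + (if j ≤ n - 1 then
            κ n * gBack κ (n - 1) (fun k => if k = j then 1 else 0) else 0)
        + (if j = n then -κ n else 0)))
    (y : ℕ → ℝ) :
    b * ∑ j ∈ Icc 1 n, K j * y j =
      -∑ j ∈ Icc 1 n, l j * y j + gBack κ (n - 1) (fun k => y (k + 1))
        + κ n * gBack κ (n - 1) y - κ n * y n := by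
  obtain ⟨m, rfl⟩ : ∃ m, n = m + 1 := ⟨n - 1, by omega⟩
  simp only [Nat.add_sub_cancel] at hK ⊢
  set c : ℕ → ℝ := fun j => gBack κ m (fun k => if k = j then 1 else 0)
  have hterm : ∀ j ∈ Icc 1 (m + 1), b * (K j * y j) = -(l j * y j)
      + (if 2 ≤ j then c (j - 1) * y j else 0) + (if j ≤ m then κ (m + 1) * (c j * y j) else 0)
      + (if j = m + 1 then -κ (m + 1) * y j else 0) := fun j hj => by
    rw [hK j (mem_Icc.1 hj).1 (mem_Icc.1 hj).2]
    field_simp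
    split_ifs <;> ring
  have htop : ∑ j ∈ Icc 1 (m + 1), (if j ≤ m then κ (m + 1) * (c j * y j) else 0)
      = κ (m + 1) * ∑ j ∈ Icc 1 m, c j * y j := by
    rw [sum_Icc_succ_top (by omega), if_neg (by omega), add_zero, mul_sum]
    exact sum_congr rfl fun j hj => if_pos (mem_Icc.1 hj).2
  rw [mul_sum, sum_congr rfl hterm, sum_add_distrib, sum_add_distrib, sum_add_distrib,
    sum_neg_distrib, sum_Icc_ite_two_le, htop, sum_ite_eq' _ _ (fun j => -κ (m + 1) * y j),
    if_pos (by simp), ← gBack_eq_sum, gBack_eq_sum κ m fun k => y (k + 1)]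
  simp only [Nat.add_sub_cancel]
  ring

theorem first_backstepping_transformation_general
    (n : ℕ) (hn : 1 ≤ n) (l : ℕ → ℝ) (b : ℝ) (hb : 0 < b)
    (κ : ℕ → ℝ)
    (I : Set ℝ)
    (w0 : ℝ → ℝ)
    (Y : ℝ → ℕ → ℝ)
    -- Ẏ(t) = A Y(t) + B w₀(t), componentwise:
    (hY : ∀ t ∈ I, ∀ i, 1 ≤ i → i ≤ n - 1 →
      HasDerivAt (fun s => Y s i) (Y t (i + 1)) t)
    (hYn : ∀ t ∈ I,
      HasDerivAt (fun s => Y s n)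
        ((∑ j ∈ Finset.Icc 1 n, l j * Y t j) + b * w0 t) t)
    -- the transformed state Z and the gain row vector K:
    (z : ℝ → ℕ → ℝ) (hz : ∀ t i, z t i = Y t i - gBack κ (i - 1) (Y t))
    (K : ℕ → ℝ)
    (hK : ∀ j, 1 ≤ j → j ≤ n → K j =
      (1 / b) * (-l j
        + (if 2 ≤ j then gBack κ (n - 1) (fun k => if k = j - 1 then 1 else 0)
            else 0)
        + (if j ≤ n - 1 then
            κ n * gBack κ (n - 1) (fun k => if k = j then 1 else 0) else 0)
        + (if j = n then -κ n else 0))) :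
    -- Ż(t) = A_Z Z(t) + B w₀(t) - B Kᵀ Y(t), componentwise:
    (∀ t ∈ I, ∀ i, 1 ≤ i → i ≤ n - 1 →
      HasDerivAt (fun s => z s i) (-κ i * z t i + z t (i + 1)) t) ∧
    (∀ t ∈ I,
      HasDerivAt (fun s => z s n)
        (-κ n * z t n + b * w0 t - b * ∑ j ∈ Finset.Icc 1 n, K j * Y t j) t) := by
  have hz' : ∀ i, (fun s => z s i) = fun s => Y s i - gBack κ (i - 1) (Y s) :=
    fun i => funext fun s => hz s i
  have hg : ∀ t ∈ I, ∀ m, m + 1 ≤ n →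
      HasDerivAt (fun s => gBack κ m (Y s)) (gBack κ m fun k => Y t (k + 1)) t :=
    fun t ht m hm => hasDerivAt_gBack κ fun k hk1 hkm => hY t ht k hk1 (by omega)
  refine ⟨fun t ht i hi1 hin => ?_, fun t ht => ?_⟩
  · obtain ⟨m, rfl⟩ : ∃ m, i = m + 1 := ⟨i - 1, by omega⟩
    rw [hz']
    refine ((hY t ht (m + 1) hi1 hin).sub (hg t ht m (by omega))).congr_deriv ?_
    rw [hz, hz, Nat.add_sub_cancel, Nat.add_sub_cancel, gBack_succ_eq_shift]
    ring
  · rw [hz']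
    refine ((hYn t ht).sub (hg t ht (n - 1) (by omega))).congr_deriv ?_
    rw [hz, mul_sum_gain_eq hn l hb.ne' κ hK]
    ring

/-- The first (ODE) nonundershooting backstepping
transformation: the companion-form ODE `Ẏ = AY + B w₀(t)` (componentwise
`y_i' = y_{i+1}` for `i ≤ n-1` and `y_n' = Σ_j l_j y_j + b w₀(t)`, which is
exactly `Ẏ = AY + Bw₀` for the stated `A` and `B = (0,…,0,b)ᵀ`) is mapped by
`z_i = y_i - g_{i-1}(y_1,…,y_{i-1})` into `Ż = A_Z Z + B w₀ - B Kᵀ Y`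
(componentwise `z_i' = -κ_i z_i + z_{i+1}` for `i ≤ n-1` and
`z_n' = -κ_n z_n + b w₀ - b Σ_j K_j y_j`), with the stated constant row
vector `K`. -/
theorem first_backstepping_transformation
    (n : ℕ) (hn : 1 ≤ n) (l : ℕ → ℝ) (b : ℝ) (hb : 0 < b)
    (κ : ℕ → ℝ) (hκ : ∀ i, 1 ≤ i → i ≤ n → 0 < κ i)
    (I : Set ℝ) (hI : I.OrdConnected)
    (w0 : ℝ → ℝ) (hw0 : ContinuousOn w0 I)
    (Y : ℝ → ℕ → ℝ)
    -- Ẏ(t) = A Y(t) + B w₀(t), componentwise: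
    (hY : ∀ t ∈ I, ∀ i, 1 ≤ i → i ≤ n - 1 →
      HasDerivAt (fun s => Y s i) (Y t (i + 1)) t)
    (hYn : ∀ t ∈ I,
      HasDerivAt (fun s => Y s n)
        ((∑ j ∈ Finset.Icc 1 n, l j * Y t j) + b * w0 t) t)
    -- the transformed state Z and the gain row vector K:
    (z : ℝ → ℕ → ℝ) (hz : ∀ t i, z t i = Y t i - gBack κ (i - 1) (Y t))
    (K : ℕ → ℝ)
    (hK : ∀ j, 1 ≤ j → j ≤ n → K j =
      (1 / b) * (-l j
        + (if 2 ≤ j then gBack κ (n - 1) (fun k => if k = j - 1 then 1 else 0)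
            else 0)
        + (if j ≤ n - 1 then
            κ n * gBack κ (n - 1) (fun k => if k = j then 1 else 0) else 0)
        + (if j = n then -κ n else 0))) :
    -- Ż(t) = A_Z Z(t) + B w₀(t) - B Kᵀ Y(t), componentwise:
    (∀ t ∈ I, ∀ i, 1 ≤ i → i ≤ n - 1 →
      HasDerivAt (fun s => z s i) (-κ i * z t i + z t (i + 1)) t) ∧
    (∀ t ∈ I,
      HasDerivAt (fun s => z s n)
        (-κ n * z t n + b * w0 t - b * ∑ j ∈ Finset.Icc 1 n, K j * Y t j) t) :=
  first_backstepping_transformation_general n hn l b hb κ I w0 Y hY hYn z hz K hK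
end

section
/- Let q1, q2 > 0 and d1, d2, p ∈ ℝ. Let F, H : 𝒟 → ℝ be continuously differentiable on the triangle 𝒟 = {(x,y) : 0 ≤ y ≤ x ≤ 1} and satisfy q2 ∂x F(x,y) − q1 ∂y F(x,y) = d2 H(x,y) and q2 ∂x H(x,y) + q2 ∂y H(x,y) = d1 F(x,y) on 𝒟, together with F(x,x) = −d2/(q1+q2) and H(x,0) = (q1 p / q2) F(x,0) for all x ∈ [0,1]. Let T > 0 and let z, w : [0,1] × [0,T] → ℝ be continuously differentiable and satisfy ∂t z(x,t) = −q1 ∂x z(x,t) + d1 w(x,t) and ∂t w(x,t) = q2 ∂x w(x,t) + d2 z(x,t) on [0,1] × [0,T], with z(0,t) = p w(0,t) for all t ∈ [0,T]. Define η(x,t) = w(x,t) − ∫₀ˣ F(x,y) z(y,t) dy − ∫₀ˣ H(x,y) w(y,t) dy. Then ∂t η(x,t) = q2 ∂x η(x,t) for all (x,t) ∈ [0,1] × [0,T]. -/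
/-!
Differentiating `η` under the integral sign (a Leibniz rule in `x`, differentiation in the
parameter `t`) and substituting the plant equations, the kernel equations turn the integrand of
`η_t - q2 η_x` into the exact `y`-derivative of `q1 F z - q2 H w`. What is left are the boundary
terms at `y = x` and `y = 0`, which cancel by `F(x,x) = -d2/(q1+q2)`,
`H(x,0) = (q1 p/q2) F(x,0)` and `z(0,t) = p w(0,t)`. Since the kernels live on the triangle only,
for the Leibniz rule they are first extended to the square by their tangent lines in `x`.
-/

open Set Filter Topology Asymptotics intervalIntegral

theorem abs_sub_sub_mul_le_of_hasDerivWithinAt {f f' : ℝ → ℝ} {a b ε : ℝ}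
    (hf : ∀ u ∈ uIcc a b, HasDerivWithinAt f (f' u) (uIcc a b) u)
    (hε : ∀ u ∈ uIcc a b, |f' u - f' a| ≤ ε) :
    |f b - f a - (b - a) * f' a| ≤ ε * |b - a| := by
  have hlin : ∀ u ∈ uIcc a b,
      HasDerivWithinAt (fun v => f v - v * f' a) (f' u - f' a) (uIcc a b) u := fun u hu =>
    (hf u hu).sub (by simpa using (hasDerivWithinAt_id u _).mul_const (f' a))
  have := Convex.norm_image_sub_le_of_norm_hasDerivWithin_le hlin hε (convex_uIcc a b)
    left_mem_uIcc right_mem_uIcc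
  simp only [Real.norm_eq_abs] at this
  convert this using 2
  ring

theorem eventually_forall_abs_sub_sub_mul_le {g gt : ℝ → ℝ → ℝ} {Y : Set ℝ}
    {c d s ε : ℝ} (hY : IsCompact Y)
    (hgt : ContinuousOn (fun q : ℝ × ℝ => gt q.1 q.2) (Y ×ˢ Icc c d))
    (hd : ∀ y ∈ Y, ∀ s ∈ Icc c d, HasDerivWithinAt (g y) (gt y s) (Icc c d) s)
    (hs : s ∈ Icc c d) (hε : 0 < ε) :
    ∀ᶠ s' in 𝓝[Icc c d] s, ∀ y ∈ Y,
      |g y s' - g y s - (s' - s) * gt y s| ≤ ε * |s' - s| := by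
  obtain ⟨δ, hδ, hδgt⟩ := Metric.uniformContinuousOn_iff.1
    ((hY.prod isCompact_Icc).uniformContinuousOn_of_continuous hgt) ε hε
  filter_upwards [self_mem_nhdsWithin, nhdsWithin_le_nhds (Metric.ball_mem_nhds s hδ)]
    with s' hs' hss' y hy
  have hsub : uIcc s s' ⊆ Icc c d := uIcc_subset_Icc hs hs'
  refine abs_sub_sub_mul_le_of_hasDerivWithinAt (fun u hu => (hd y hy u (hsub hu)).mono hsub)
    fun u hu => (hδgt (y, u) ⟨hy, hsub hu⟩ (y, s) ⟨hy, hs⟩ ?_).le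
  rw [Prod.dist_eq, dist_self, max_eq_right dist_nonneg]
  exact (Real.dist_le_of_mem_uIcc hu left_mem_uIcc).trans_lt (by rwa [dist_comm])

theorem hasDerivWithinAt_intervalIntegral_param {g gt : ℝ → ℝ → ℝ} {a b c d s : ℝ}
    (hg : ∀ s ∈ Icc c d, IntervalIntegrable (fun y => g y s) MeasureTheory.volume a b)
    (hgt : ContinuousOn (fun q : ℝ × ℝ => gt q.1 q.2) (uIcc a b ×ˢ Icc c d))
    (hd : ∀ y ∈ uIcc a b, ∀ s ∈ Icc c d, HasDerivWithinAt (g y) (gt y s) (Icc c d) s)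
    (hs : s ∈ Icc c d) :
    HasDerivWithinAt (fun s => ∫ y in a..b, g y s) (∫ y in a..b, gt y s) (Icc c d) s := by
  have hgt_int : IntervalIntegrable (fun y => gt y s) MeasureTheory.volume a b :=
    (hgt.uncurry_right s hs).intervalIntegrable
  rw [hasDerivWithinAt_iff_isLittleO, isLittleO_iff]
  intro ε hε
  filter_upwards [eventually_forall_abs_sub_sub_mul_le (ε := ε / (|b - a| + 1)) isCompact_uIcc
    hgt hd hs (by positivity), self_mem_nhdsWithin] with s' hlin hs'
  rw [smul_eq_mul, ← integral_sub (hg s' hs') (hg s hs), ← integral_const_mul,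
    ← integral_sub ((hg s' hs').sub (hg s hs)) (hgt_int.const_mul _)]
  calc ‖∫ y in a..b, (g y s' - g y s - (s' - s) * gt y s)‖
      ≤ ε / (|b - a| + 1) * |s' - s| * |b - a| :=
        norm_integral_le_of_norm_le_const fun y hy => hlin y (uIoc_subset_uIcc hy)
    _ ≤ ε * ‖s' - s‖ := by
        rw [Real.norm_eq_abs, mul_right_comm, div_mul_eq_mul_div]
        gcongr
        rw [div_le_iff₀ (by positivity)]
        nlinarith [abs_nonneg (b - a)]

theorem hasDerivWithinAt_intervalIntegral_from_diag {G : ℝ → ℝ → ℝ} {a b x : ℝ}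
    (hG : ContinuousOn (fun q : ℝ × ℝ => G q.1 q.2) (Icc a b ×ˢ Icc a b))
    (hx : x ∈ Icc a b) :
    HasDerivWithinAt (fun u => ∫ y in x..u, G u y) (G x x) (Icc a b) x := by
  rw [hasDerivWithinAt_iff_isLittleO, isLittleO_iff]
  intro ε hε
  obtain ⟨δ, hδ, hδG⟩ := Metric.continuousWithinAt_iff.1 (hG (x, x) ⟨hx, hx⟩) ε hε
  filter_upwards [self_mem_nhdsWithin, nhdsWithin_le_nhds (Metric.ball_mem_nhds x hδ)]
    with u hu hux
  have hsub : uIcc x u ⊆ Icc a b := uIcc_subset_Icc hx hu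
  rw [integral_same, sub_zero, ← integral_const, ← integral_sub
    ((hG.uncurry_left u hu).mono hsub).intervalIntegrable intervalIntegrable_const]
  refine (norm_integral_le_of_norm_le_const fun y hy => ?_).trans_eq
    (by rw [Real.norm_eq_abs])
  have hy : y ∈ uIcc x u := uIoc_subset_uIcc hy
  refine (hδG (x := (u, y)) ⟨hu, hsub hy⟩ ?_).le
  rw [Prod.dist_eq, max_lt_iff]
  exact ⟨hux, (Real.dist_le_of_mem_uIcc hy left_mem_uIcc).trans_lt (by rwa [dist_comm])⟩

theorem hasDerivWithinAt_intervalIntegral_leibniz {G Gx : ℝ → ℝ → ℝ} {a b x : ℝ}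
    (hG : ContinuousOn (fun q : ℝ × ℝ => G q.1 q.2) (Icc a b ×ˢ Icc a b))
    (hGx : ContinuousOn (fun q : ℝ × ℝ => Gx q.1 q.2) (Icc a b ×ˢ Icc a b))
    (hd : ∀ y ∈ Icc a b, ∀ u ∈ Icc a b,
      HasDerivWithinAt (fun u' => G u' y) (Gx u y) (Icc a b) u)
    (hx : x ∈ Icc a b) :
    HasDerivWithinAt (fun u => ∫ y in a..u, G u y) (G x x + ∫ y in a..x, Gx x y)
      (Icc a b) x := by
  have ha : a ∈ Icc a b := left_mem_Icc.2 (hx.1.trans hx.2)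
  have hsub : uIcc a x ⊆ Icc a b := uIcc_subset_Icc ha hx
  have hint : ∀ u ∈ Icc a b, ∀ v ∈ Icc a b, ∀ w ∈ Icc a b,
      IntervalIntegrable (G u) MeasureTheory.volume v w := fun u hu v hv w hw =>
    ((hG.uncurry_left u hu).mono (uIcc_subset_Icc hv hw)).intervalIntegrable
  have hparam : HasDerivWithinAt (fun u => ∫ y in a..x, G u y) (∫ y in a..x, Gx x y)
      (Icc a b) x :=
    hasDerivWithinAt_intervalIntegral_param (g := fun y u => G u y) (gt := fun y u => Gx u y)
      (fun u hu => hint u hu a ha x hx)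
      (hGx.comp continuous_swap.continuousOn fun q hq => ⟨hq.2, hsub hq.1⟩)
      (fun y hy u hu => hd y (hsub hy) u hu) hx
  refine ((hasDerivWithinAt_intervalIntegral_from_diag hG hx).add hparam).congr_of_mem
    (fun u hu => ?_) hx
  rw [Pi.add_apply, add_comm, integral_add_adjacent_intervals (hint u hu a ha x hx)
    (hint u hu x hx u hu)]

def lowerTriangle (a b : ℝ) : Set (ℝ × ℝ) := {q | a ≤ q.2 ∧ q.2 ≤ q.1 ∧ q.1 ≤ b}

theorem exists_extension_of_lowerTriangle {G Gx : ℝ → ℝ → ℝ} {a b : ℝ}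
    (hG : ContinuousOn (fun q : ℝ × ℝ => G q.1 q.2) (lowerTriangle a b))
    (hGx : ContinuousOn (fun q : ℝ × ℝ => Gx q.1 q.2) (lowerTriangle a b))
    (hd : ∀ x y, a ≤ y → y ≤ x → x ≤ b →
      HasDerivWithinAt (fun x' => G x' y) (Gx x y) (Icc y b) x) :
    ∃ G' Gx' : ℝ → ℝ → ℝ,
      (∀ q ∈ lowerTriangle a b, G' q.1 q.2 = G q.1 q.2 ∧ Gx' q.1 q.2 = Gx q.1 q.2) ∧
      ContinuousOn (fun q : ℝ × ℝ => G' q.1 q.2) (Icc a b ×ˢ Icc a b) ∧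
      ContinuousOn (fun q : ℝ × ℝ => Gx' q.1 q.2) (Icc a b ×ˢ Icc a b) ∧
      ∀ y ∈ Icc a b, ∀ u ∈ Icc a b,
        HasDerivWithinAt (fun u' => G' u' y) (Gx' u y) (Icc a b) u := by
  have hproj : MapsTo (fun q : ℝ × ℝ => (max q.1 q.2, q.2)) (Icc a b ×ˢ Icc a b)
      (lowerTriangle a b) := fun q hq => ⟨hq.2.1, le_max_right _ _, max_le hq.1.2 hq.2.2⟩
  have hGx' := hGx.comp (by fun_prop) hproj
  refine ⟨fun u y => G (max u y) y + Gx (max u y) y * (u - max u y),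
    fun u y => Gx (max u y) y, fun q hq => by simp [max_eq_left hq.2.1], ?_, ?_, ?_⟩
  · exact (hG.comp (by fun_prop) hproj).add (hGx'.mul (by fun_prop))
  · exact hGx'
  · intro y hy u hu
    have htangent : HasDerivWithinAt (fun u' => G y y + Gx y y * (u' - y)) (Gx y y)
        (Icc a y) u := by
      simpa using (((hasDerivWithinAt_id u _).sub_const y).const_mul (Gx y y)).const_add (G y y)
    rw [← Icc_union_Icc_eq_Icc hy.1 hy.2]
    refine HasDerivWithinAt.union ?_ ?_
    · by_cases huy : u ≤ y
      · simp only [max_eq_right huy]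
        exact htangent.congr (fun u' hu' => by simp [max_eq_right hu'.2])
          (by simp [max_eq_right huy])
      · exact HasFDerivWithinAt.of_notMem_closure
          (by rw [closure_Icc]; exact fun h => huy h.2)
    · by_cases hyu : y ≤ u
      · simp only [max_eq_left hyu]
        exact (hd u y hy.1 hyu hu.2).congr (fun u' hu' => by simp [max_eq_left hu'.1])
          (by simp [max_eq_left hyu])
      · exact HasFDerivWithinAt.of_notMem_closure
          (by rw [closure_Icc]; exact fun h => hyu h.1)

theorem hasDerivWithinAt_intervalIntegral_lowerTriangle_mul {K Kx : ℝ → ℝ → ℝ} {v : ℝ → ℝ}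
    {a b x : ℝ}
    (hK : ContinuousOn (fun q : ℝ × ℝ => K q.1 q.2) (lowerTriangle a b))
    (hKx : ContinuousOn (fun q : ℝ × ℝ => Kx q.1 q.2) (lowerTriangle a b))
    (hd : ∀ x y, a ≤ y → y ≤ x → x ≤ b →
      HasDerivWithinAt (fun x' => K x' y) (Kx x y) (Icc y b) x)
    (hv : ContinuousOn v (Icc a b)) (hx : x ∈ Icc a b) :
    HasDerivWithinAt (fun x' => ∫ y in a..x', K x' y * v y)
      (K x x * v x + ∫ y in a..x, Kx x y * v y) (Icc a b) x := by
  obtain ⟨K', Kx', hext, hK', hKx', hK'd⟩ := exists_extension_of_lowerTriangle hK hKx hd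
  have hext' : ∀ u ∈ Icc a b, ∀ y ∈ uIcc a u, K' u y = K u y ∧ Kx' u y = Kx u y :=
    fun u hu y hy => by
      rw [uIcc_of_le hu.1] at hy
      exact hext (u, y) ⟨hy.1, hy.2, hu.2⟩
  have hv' : ContinuousOn (fun q : ℝ × ℝ => v q.2) (Icc a b ×ˢ Icc a b) :=
    hv.comp continuousOn_snd fun q hq => hq.2
  have hleibniz := hasDerivWithinAt_intervalIntegral_leibniz
    (G := fun u y => K' u y * v y) (Gx := fun u y => Kx' u y * v y) (hK'.mul hv') (hKx'.mul hv')
    (fun y hy u hu => (hK'd y hy u hu).mul_const (v y)) hx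
  refine (hleibniz.congr_of_mem (fun u hu => integral_congr fun y hy => ?_) hx).congr_deriv ?_
  · simp only [(hext' u hu y hy).1]
  · rw [(hext' x hx x right_mem_uIcc).1]
    congr 1
    exact integral_congr fun y hy => by simp only [(hext' x hx y hy).2]

theorem hasDerivWithinAt_intervalIntegral_mul_param {k : ℝ → ℝ} {u ut : ℝ → ℝ → ℝ}
    {a b c d s : ℝ} (hab : a ≤ b) (hk : ContinuousOn k (Icc a b))
    (hu : ContinuousOn (fun q : ℝ × ℝ => u q.1 q.2) (Icc a b ×ˢ Icc c d))
    (hut : ContinuousOn (fun q : ℝ × ℝ => ut q.1 q.2) (Icc a b ×ˢ Icc c d))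
    (hd : ∀ y ∈ Icc a b, ∀ s ∈ Icc c d, HasDerivWithinAt (u y) (ut y s) (Icc c d) s)
    (hs : s ∈ Icc c d) :
    HasDerivWithinAt (fun s => ∫ y in a..b, k y * u y s) (∫ y in a..b, k y * ut y s)
      (Icc c d) s := by
  rw [← uIcc_of_le hab] at hk hu hut hd
  exact hasDerivWithinAt_intervalIntegral_param
    (fun s hs => (hk.mul (hu.uncurry_right s hs)).intervalIntegrable)
    ((hk.comp continuousOn_fst fun q hq => hq.1).mul hut)
    (fun y hy s hs => (hd y hy s hs).const_mul (k y)) hs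

theorem integral_eq_boundary_of_kernel_equations {q1 q2 d1 d2 a b : ℝ} (hab : a ≤ b)
    {f fx fy g gx gy z zx zt w wx wt : ℝ → ℝ}
    (hf : ∀ y ∈ Icc a b, HasDerivWithinAt f (fy y) (Icc a b) y)
    (hg : ∀ y ∈ Icc a b, HasDerivWithinAt g (gy y) (Icc a b) y)
    (hz : ∀ y ∈ Icc a b, HasDerivWithinAt z (zx y) (Icc a b) y)
    (hw : ∀ y ∈ Icc a b, HasDerivWithinAt w (wx y) (Icc a b) y)
    (hfx : ContinuousOn fx (Icc a b)) (hfy : ContinuousOn fy (Icc a b))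
    (hgx : ContinuousOn gx (Icc a b)) (hgy : ContinuousOn gy (Icc a b))
    (hzx : ContinuousOn zx (Icc a b)) (hzt : ContinuousOn zt (Icc a b))
    (hwx : ContinuousOn wx (Icc a b)) (hwt : ContinuousOn wt (Icc a b))
    (hfpde : ∀ y ∈ Icc a b, q2 * fx y - q1 * fy y = d2 * g y)
    (hgpde : ∀ y ∈ Icc a b, q2 * gx y + q2 * gy y = d1 * f y)
    (hzpde : ∀ y ∈ Icc a b, zt y = -q1 * zx y + d1 * w y)
    (hwpde : ∀ y ∈ Icc a b, wt y = q2 * wx y + d2 * z y) :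
    q2 * (∫ y in a..b, fx y * z y) + q2 * (∫ y in a..b, gx y * w y)
      - (∫ y in a..b, f y * zt y) - (∫ y in a..b, g y * wt y)
      = q1 * (f b * z b - f a * z a) - q2 * (g b * w b - g a * w a) := by
  have hfc : ContinuousOn f (Icc a b) := fun y hy => (hf y hy).continuousWithinAt
  have hgc : ContinuousOn g (Icc a b) := fun y hy => (hg y hy).continuousWithinAt
  have hzc : ContinuousOn z (Icc a b) := fun y hy => (hz y hy).continuousWithinAt
  have hwc : ContinuousOn w (Icc a b) := fun y hy => (hw y hy).continuousWithinAt
  have hint : ∀ {φ : ℝ → ℝ}, ContinuousOn φ (Icc a b) →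
      IntervalIntegrable φ MeasureTheory.volume a b := fun hφ => hφ.intervalIntegrable_of_Icc hab
  rw [← uIcc_of_le hab] at hf hg hz hw
  have ibp_f := integral_deriv_mul_eq_sub_of_hasDerivWithinAt hf hz (hint hfy) (hint hzx)
  have ibp_g := integral_deriv_mul_eq_sub_of_hasDerivWithinAt hg hw (hint hgy) (hint hwx)
  calc _ = ∫ y in a..b, (q2 * (fx y * z y) + q2 * (gx y * w y) - f y * zt y - g y * wt y) := by
        rw [integral_sub (hint (by fun_prop)) (hint (by fun_prop)),
          integral_sub (hint (by fun_prop)) (hint (by fun_prop)),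
          integral_add (hint (by fun_prop)) (hint (by fun_prop)), integral_const_mul,
          integral_const_mul]
    _ = ∫ y in a..b, (q1 * (fy y * z y + f y * zx y) - q2 * (gy y * w y + g y * wx y)) :=
        integral_congr fun y hy => by
          rw [uIcc_of_le hab] at hy
          linear_combination z y * hfpde y hy + w y * hgpde y hy - f y * hzpde y hy
            - g y * hwpde y hy
    _ = _ := by
        rw [integral_sub (hint (by fun_prop)) (hint (by fun_prop)), integral_const_mul,
          integral_const_mul, ibp_f, ibp_g]

theorem volterra_transport_general
    (q1 q2 : ℝ) (hq1 : 0 < q1) (hq2 : 0 < q2) (d1 d2 p : ℝ)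
    (T : ℝ)
    (F H Fx Fy Hx Hy : ℝ → ℝ → ℝ)
    -- F, H are continuously differentiable on the triangle 𝒟:
    (hFc : ContinuousOn (fun q : ℝ × ℝ => F q.1 q.2)
      {q : ℝ × ℝ | 0 ≤ q.2 ∧ q.2 ≤ q.1 ∧ q.1 ≤ 1})
    (hHc : ContinuousOn (fun q : ℝ × ℝ => H q.1 q.2)
      {q : ℝ × ℝ | 0 ≤ q.2 ∧ q.2 ≤ q.1 ∧ q.1 ≤ 1})
    (hFx : ∀ x y, 0 ≤ y → y ≤ x → x ≤ 1 →
      HasDerivWithinAt (fun x' => F x' y) (Fx x y) (Icc y 1) x)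
    (hFy : ∀ x y, 0 ≤ y → y ≤ x → x ≤ 1 →
      HasDerivWithinAt (fun y' => F x y') (Fy x y) (Icc 0 x) y)
    (hHx : ∀ x y, 0 ≤ y → y ≤ x → x ≤ 1 →
      HasDerivWithinAt (fun x' => H x' y) (Hx x y) (Icc y 1) x)
    (hHy : ∀ x y, 0 ≤ y → y ≤ x → x ≤ 1 →
      HasDerivWithinAt (fun y' => H x y') (Hy x y) (Icc 0 x) y)
    (hFxc : ContinuousOn (fun q : ℝ × ℝ => Fx q.1 q.2)
      {q : ℝ × ℝ | 0 ≤ q.2 ∧ q.2 ≤ q.1 ∧ q.1 ≤ 1})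
    (hFyc : ContinuousOn (fun q : ℝ × ℝ => Fy q.1 q.2)
      {q : ℝ × ℝ | 0 ≤ q.2 ∧ q.2 ≤ q.1 ∧ q.1 ≤ 1})
    (hHxc : ContinuousOn (fun q : ℝ × ℝ => Hx q.1 q.2)
      {q : ℝ × ℝ | 0 ≤ q.2 ∧ q.2 ≤ q.1 ∧ q.1 ≤ 1})
    (hHyc : ContinuousOn (fun q : ℝ × ℝ => Hy q.1 q.2)
      {q : ℝ × ℝ | 0 ≤ q.2 ∧ q.2 ≤ q.1 ∧ q.1 ≤ 1})
    -- the kernel equations on 𝒟: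
    (hFpde : ∀ x y, 0 ≤ y → y ≤ x → x ≤ 1 →
      q2 * Fx x y - q1 * Fy x y = d2 * H x y)
    (hHpde : ∀ x y, 0 ≤ y → y ≤ x → x ≤ 1 →
      q2 * Hx x y + q2 * Hy x y = d1 * F x y)
    (hFbc : ∀ x ∈ Icc (0:ℝ) 1, F x x = -d2 / (q1 + q2))
    (hHbc : ∀ x ∈ Icc (0:ℝ) 1, H x 0 = (q1 * p / q2) * F x 0)
    -- the plant states z, w, continuously differentiable on [0,1] × [0,T]:
    (z w zx zt wx wt : ℝ → ℝ → ℝ)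
    (hzc : ContinuousOn (fun q : ℝ × ℝ => z q.1 q.2) (Icc 0 1 ×ˢ Icc 0 T))
    (hwc : ContinuousOn (fun q : ℝ × ℝ => w q.1 q.2) (Icc 0 1 ×ˢ Icc 0 T))
    (hzx : ∀ x ∈ Icc (0:ℝ) 1, ∀ t ∈ Icc (0:ℝ) T,
      HasDerivWithinAt (fun x' => z x' t) (zx x t) (Icc 0 1) x)
    (hzt : ∀ x ∈ Icc (0:ℝ) 1, ∀ t ∈ Icc (0:ℝ) T,
      HasDerivWithinAt (fun t' => z x t') (zt x t) (Icc 0 T) t)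
    (hwx : ∀ x ∈ Icc (0:ℝ) 1, ∀ t ∈ Icc (0:ℝ) T,
      HasDerivWithinAt (fun x' => w x' t) (wx x t) (Icc 0 1) x)
    (hwt : ∀ x ∈ Icc (0:ℝ) 1, ∀ t ∈ Icc (0:ℝ) T,
      HasDerivWithinAt (fun t' => w x t') (wt x t) (Icc 0 T) t)
    (hzxc : ContinuousOn (fun q : ℝ × ℝ => zx q.1 q.2) (Icc 0 1 ×ˢ Icc 0 T))
    (hztc : ContinuousOn (fun q : ℝ × ℝ => zt q.1 q.2) (Icc 0 1 ×ˢ Icc 0 T))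
    (hwxc : ContinuousOn (fun q : ℝ × ℝ => wx q.1 q.2) (Icc 0 1 ×ˢ Icc 0 T))
    (hwtc : ContinuousOn (fun q : ℝ × ℝ => wt q.1 q.2) (Icc 0 1 ×ˢ Icc 0 T))
    -- the coupled hyperbolic plant equations:
    (hzpde : ∀ x ∈ Icc (0:ℝ) 1, ∀ t ∈ Icc (0:ℝ) T,
      zt x t = -q1 * zx x t + d1 * w x t)
    (hwpde : ∀ x ∈ Icc (0:ℝ) 1, ∀ t ∈ Icc (0:ℝ) T,
      wt x t = q2 * wx x t + d2 * z x t)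
    (hbc : ∀ t ∈ Icc (0:ℝ) T, z 0 t = p * w 0 t)
    -- the transformed state:
    (η : ℝ → ℝ → ℝ)
    (hη : ∀ x t, η x t = w x t - (∫ y in (0:ℝ)..x, F x y * z y t)
      - ∫ y in (0:ℝ)..x, H x y * w y t) :
    -- conclusion: ∂t η = q2 ∂x η on [0,1] × [0,T]:
    ∀ x ∈ Icc (0:ℝ) 1, ∀ t ∈ Icc (0:ℝ) T,
      ∃ e : ℝ, HasDerivWithinAt (fun x' => η x' t) e (Icc 0 1) x ∧
        HasDerivWithinAt (fun t' => η x t') (q2 * e) (Icc 0 T) t := by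
  intro x hx t ht
  have hsub : Icc 0 x ⊆ Icc 0 1 := Icc_subset_Icc_right hx.2
  have hrect : Icc 0 x ×ˢ Icc 0 T ⊆ Icc 0 1 ×ˢ Icc 0 T := prod_mono hsub subset_rfl
  have slice_x : ∀ {K : ℝ → ℝ → ℝ}, ContinuousOn (fun q : ℝ × ℝ => K q.1 q.2)
      (lowerTriangle 0 1) → ContinuousOn (K x) (Icc 0 x) := fun hK =>
    hK.comp (Continuous.prodMk_right x).continuousOn fun y hy => ⟨hy.1, hy.2, hx.2⟩
  have slice_t : ∀ {u : ℝ → ℝ → ℝ}, ContinuousOn (fun q : ℝ × ℝ => u q.1 q.2)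
      (Icc 0 1 ×ˢ Icc 0 T) → ContinuousOn (fun y => u y t) (Icc 0 x) := fun hu =>
    (hu.uncurry_right t ht).mono hsub
  have hηx : HasDerivWithinAt (fun x' => η x' t)
      (wx x t - (F x x * z x t + ∫ y in (0:ℝ)..x, Fx x y * z y t)
        - (H x x * w x t + ∫ y in (0:ℝ)..x, Hx x y * w y t)) (Icc 0 1) x := by
    simp only [hη]
    exact ((hwx x hx t ht).sub (hasDerivWithinAt_intervalIntegral_lowerTriangle_mul hFc hFxc hFx
      (hzc.uncurry_right t ht) hx)).sub
      (hasDerivWithinAt_intervalIntegral_lowerTriangle_mul hHc hHxc hHx (hwc.uncurry_right t ht) hx)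
  have hηt : HasDerivWithinAt (fun t' => η x t')
      (wt x t - (∫ y in (0:ℝ)..x, F x y * zt y t) - ∫ y in (0:ℝ)..x, H x y * wt y t)
      (Icc 0 T) t := by
    simp only [hη]
    exact ((hwt x hx t ht).sub (hasDerivWithinAt_intervalIntegral_mul_param hx.1 (slice_x hFc)
      (hzc.mono hrect) (hztc.mono hrect) (fun y hy s hs => hzt y (hsub hy) s hs) ht)).sub
      (hasDerivWithinAt_intervalIntegral_mul_param hx.1 (slice_x hHc)
      (hwc.mono hrect) (hwtc.mono hrect) (fun y hy s hs => hwt y (hsub hy) s hs) ht)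
  have hboundary := integral_eq_boundary_of_kernel_equations hx.1
    (fun y hy => hFy x y hy.1 hy.2 hx.2) (fun y hy => hHy x y hy.1 hy.2 hx.2)
    (fun y hy => (hzx y (hsub hy) t ht).mono hsub) (fun y hy => (hwx y (hsub hy) t ht).mono hsub)
    (slice_x hFxc) (slice_x hFyc) (slice_x hHxc) (slice_x hHyc)
    (slice_t hzxc) (slice_t hztc) (slice_t hwxc) (slice_t hwtc)
    (fun y hy => hFpde x y hy.1 hy.2 hx.2) (fun y hy => hHpde x y hy.1 hy.2 hx.2)
    (fun y hy => hzpde y (hsub hy) t ht) (fun y hy => hwpde y (hsub hy) t ht)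
  have hFxx : F x x * (q1 + q2) = -d2 := by
    rw [hFbc x hx]
    field_simp
  have hH0 : q2 * H x 0 = q1 * p * F x 0 := by
    rw [hHbc x hx]
    field_simp
  refine ⟨_, hηx, hηt.congr_deriv ?_⟩
  linear_combination hboundary + hwpde x hx t ht + z x t * hFxx + w 0 t * hH0
    - q1 * F x 0 * hbc t ht

/-- The Volterra transformation
`η(x,t) = w(x,t) - ∫₀ˣ F(x,y) z(y,t) dy - ∫₀ˣ H(x,y) w(y,t) dy`, with kernels
`(F,H)` solving the kernel equations on the triangle
`𝒟 = {(x,y) : 0 ≤ y ≤ x ≤ 1}`, maps the coupled hyperbolic system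
`z_t = -q1 z_x + d1 w`, `w_t = q2 w_x + d2 z`, `z(0,t) = p w(0,t)` into the
pure transport equation `η_t = q2 η_x`. -/
theorem volterra_transport
    (q1 q2 : ℝ) (hq1 : 0 < q1) (hq2 : 0 < q2) (d1 d2 p : ℝ)
    (T : ℝ) (hT : 0 < T)
    (F H Fx Fy Hx Hy : ℝ → ℝ → ℝ)
    -- F, H are continuously differentiable on the triangle 𝒟:
    (hFc : ContinuousOn (fun q : ℝ × ℝ => F q.1 q.2)
      {q : ℝ × ℝ | 0 ≤ q.2 ∧ q.2 ≤ q.1 ∧ q.1 ≤ 1})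
    (hHc : ContinuousOn (fun q : ℝ × ℝ => H q.1 q.2)
      {q : ℝ × ℝ | 0 ≤ q.2 ∧ q.2 ≤ q.1 ∧ q.1 ≤ 1})
    (hFx : ∀ x y, 0 ≤ y → y ≤ x → x ≤ 1 →
      HasDerivWithinAt (fun x' => F x' y) (Fx x y) (Icc y 1) x)
    (hFy : ∀ x y, 0 ≤ y → y ≤ x → x ≤ 1 →
      HasDerivWithinAt (fun y' => F x y') (Fy x y) (Icc 0 x) y)
    (hHx : ∀ x y, 0 ≤ y → y ≤ x → x ≤ 1 →
      HasDerivWithinAt (fun x' => H x' y) (Hx x y) (Icc y 1) x)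
    (hHy : ∀ x y, 0 ≤ y → y ≤ x → x ≤ 1 →
      HasDerivWithinAt (fun y' => H x y') (Hy x y) (Icc 0 x) y)
    (hFxc : ContinuousOn (fun q : ℝ × ℝ => Fx q.1 q.2)
      {q : ℝ × ℝ | 0 ≤ q.2 ∧ q.2 ≤ q.1 ∧ q.1 ≤ 1})
    (hFyc : ContinuousOn (fun q : ℝ × ℝ => Fy q.1 q.2)
      {q : ℝ × ℝ | 0 ≤ q.2 ∧ q.2 ≤ q.1 ∧ q.1 ≤ 1})
    (hHxc : ContinuousOn (fun q : ℝ × ℝ => Hx q.1 q.2)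
      {q : ℝ × ℝ | 0 ≤ q.2 ∧ q.2 ≤ q.1 ∧ q.1 ≤ 1})
    (hHyc : ContinuousOn (fun q : ℝ × ℝ => Hy q.1 q.2)
      {q : ℝ × ℝ | 0 ≤ q.2 ∧ q.2 ≤ q.1 ∧ q.1 ≤ 1})
    -- the kernel equations on 𝒟:
    (hFpde : ∀ x y, 0 ≤ y → y ≤ x → x ≤ 1 →
      q2 * Fx x y - q1 * Fy x y = d2 * H x y)
    (hHpde : ∀ x y, 0 ≤ y → y ≤ x → x ≤ 1 →
      q2 * Hx x y + q2 * Hy x y = d1 * F x y)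
    (hFbc : ∀ x ∈ Icc (0:ℝ) 1, F x x = -d2 / (q1 + q2))
    (hHbc : ∀ x ∈ Icc (0:ℝ) 1, H x 0 = (q1 * p / q2) * F x 0)
    -- the plant states z, w, continuously differentiable on [0,1] × [0,T]:
    (z w zx zt wx wt : ℝ → ℝ → ℝ)
    (hzc : ContinuousOn (fun q : ℝ × ℝ => z q.1 q.2) (Icc 0 1 ×ˢ Icc 0 T))
    (hwc : ContinuousOn (fun q : ℝ × ℝ => w q.1 q.2) (Icc 0 1 ×ˢ Icc 0 T))
    (hzx : ∀ x ∈ Icc (0:ℝ) 1, ∀ t ∈ Icc (0:ℝ) T,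
      HasDerivWithinAt (fun x' => z x' t) (zx x t) (Icc 0 1) x)
    (hzt : ∀ x ∈ Icc (0:ℝ) 1, ∀ t ∈ Icc (0:ℝ) T,
      HasDerivWithinAt (fun t' => z x t') (zt x t) (Icc 0 T) t)
    (hwx : ∀ x ∈ Icc (0:ℝ) 1, ∀ t ∈ Icc (0:ℝ) T,
      HasDerivWithinAt (fun x' => w x' t) (wx x t) (Icc 0 1) x)
    (hwt : ∀ x ∈ Icc (0:ℝ) 1, ∀ t ∈ Icc (0:ℝ) T,
      HasDerivWithinAt (fun t' => w x t') (wt x t) (Icc 0 T) t)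
    (hzxc : ContinuousOn (fun q : ℝ × ℝ => zx q.1 q.2) (Icc 0 1 ×ˢ Icc 0 T))
    (hztc : ContinuousOn (fun q : ℝ × ℝ => zt q.1 q.2) (Icc 0 1 ×ˢ Icc 0 T))
    (hwxc : ContinuousOn (fun q : ℝ × ℝ => wx q.1 q.2) (Icc 0 1 ×ˢ Icc 0 T))
    (hwtc : ContinuousOn (fun q : ℝ × ℝ => wt q.1 q.2) (Icc 0 1 ×ˢ Icc 0 T))
    -- the coupled hyperbolic plant equations:
    (hzpde : ∀ x ∈ Icc (0:ℝ) 1, ∀ t ∈ Icc (0:ℝ) T,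
      zt x t = -q1 * zx x t + d1 * w x t)
    (hwpde : ∀ x ∈ Icc (0:ℝ) 1, ∀ t ∈ Icc (0:ℝ) T,
      wt x t = q2 * wx x t + d2 * z x t)
    (hbc : ∀ t ∈ Icc (0:ℝ) T, z 0 t = p * w 0 t)
    -- the transformed state:
    (η : ℝ → ℝ → ℝ)
    (hη : ∀ x t, η x t = w x t - (∫ y in (0:ℝ)..x, F x y * z y t)
      - ∫ y in (0:ℝ)..x, H x y * w y t) :
    -- conclusion: ∂t η = q2 ∂x η on [0,1] × [0,T]:
    ∀ x ∈ Icc (0:ℝ) 1, ∀ t ∈ Icc (0:ℝ) T,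
      ∃ e : ℝ, HasDerivWithinAt (fun x' => η x' t) e (Icc 0 1) x ∧
        HasDerivWithinAt (fun t' => η x t') (q2 * e) (Icc 0 T) t :=
  volterra_transport_general q1 q2 hq1 hq2 d1 d2 p T F H Fx Fy Hx Hy hFc hHc hFx hFy hHx hHy hFxc
    hFyc hHxc hHyc hFpde hHpde hFbc hHbc z w zx zt wx wt hzc hwc hzx hzt hwx hwt hzxc hztc hwxc hwtc
    hzpde hwpde hbc η hη
end

section
/- Let q1, q2 > 0, d1, d2, p ∈ ℝ, let n ≥ 1, let A be an n×n real matrix and B ∈ ℝⁿ. Let F, H : 𝒟 → ℝ be continuously differentiable on the triangle 𝒟 = {(x,y) : 0 ≤ y ≤ x ≤ 1} and satisfy q2 ∂x F − q1 ∂y F = d2 H and q2 ∂x H + q2 ∂y H = d1 F on 𝒟, with F(x,x) = −d2/(q1+q2) and H(x,0) = (q1 p / q2) F(x,0). Let z, w : [0,1] × [0, 1/q2] → ℝ be continuously differentiable solutions of ∂t z = −q1 ∂x z + d1 w, ∂t w = q2 ∂x w + d2 z with z(0,t) = p w(0,t), and let Y = (y_1, …, y_n) : [0, 1/q2] → ℝⁿ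 be continuously differentiable with Ẏ(t) = A Y(t) + B w(0,t). Define, for ς ∈ [0,1], Π(ς) = e₁ᵀ e^{Aς/q2} Y(0) + (1/q2) e₁ᵀ e^{Aς/q2} ∫₀^ς e^{−Ax/q2} B ( w(x,0) − ∫₀ˣ F(x,y) z(y,0) dy − ∫₀ˣ H(x,y) w(y,0) dy ) dx, where e₁ = (1,0,…,0)ᵀ. If y_1(0) ≥ 0, Π(ς) ≥ 0 for all ς ∈ (0,1), and Π(1) > 0, then y_1(t) ≥ 0 for all t ∈ [0, 1/q2) and y_1(1/q2) > 0. -/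
/-!
The backstepping variable `β(x, t) = w(x, t) - ∫₀ˣ F(x, y) z(y, t) dy - ∫₀ˣ H(x, y) w(y, t) dy`
solves the pure transport equation `β_t = q2 β_x`: differentiating `β` along the characteristic
`s ↦ (q2 s, t - s)` and integrating by parts in `y`, the kernel equations cancel every term.
Since `β(0, t) = w(0, t)`, the input of the distal ODE is `w(0, t) = β(q2 t, 0)`, which only
involves the initial data as long as `q2 t ≤ 1`. Variation of constants then gives
`y_1(t) = Π(q2 t)` on `[0, 1/q2]`, and the hypotheses on `y_1(0)` and `Π` give the signs.

All regularity is given by one-sided partial derivatives on closed domains, so differentiating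
along characteristics rests on a chain rule for functions with one continuous partial derivative,
and on the Leibniz rule for integrals with a moving upper limit derived from it.
-/

open Set Filter Topology MeasureTheory intervalIntegral Asymptotics
open scoped Matrix

theorem Convex.abs_sub_sub_mul_le_of_hasDerivWithinAt {C : Set ℝ} (hC : Convex ℝ C)
    {g g' : ℝ → ℝ} (hg : ∀ x ∈ C, HasDerivWithinAt g (g' x) C x) {L ε : ℝ}
    (hbound : ∀ x ∈ C, |g' x - L| ≤ ε) {x y : ℝ} (hx : x ∈ C) (hy : y ∈ C) :
    |g y - g x - (y - x) * L| ≤ ε * |y - x| := by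
  have hd : ∀ z ∈ C, HasDerivWithinAt (fun z => g z - z * L) (g' z - L) C z := fun z hz => by
    simpa using (hg z hz).fun_sub ((hasDerivWithinAt_id z C).mul_const L)
  have key := hC.norm_image_sub_le_of_norm_hasDerivWithin_le hd hbound hx hy
  rw [Real.norm_eq_abs, Real.norm_eq_abs] at key
  convert key using 2
  ring

theorem isLittleO_sub_sub_mul_partialDeriv {α : Type*} {l : Filter α} {f fx : ℝ → ℝ → ℝ}
    {S T : Set ℝ} (hS : Convex ℝ S) {x₀ t₀ : ℝ} (hx₀ : x₀ ∈ S)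
    (hfx : ∀ x ∈ S, ∀ t ∈ T, HasDerivWithinAt (f · t) (fx x t) S x)
    (hfxc : ContinuousWithinAt (fun q : ℝ × ℝ => fx q.1 q.2) (S ×ˢ T) (x₀, t₀))
    {ξ τ : α → ℝ} (hξ : Tendsto ξ l (𝓝 x₀)) (hτ : Tendsto τ l (𝓝 t₀))
    (hmem : ∀ᶠ a in l, ξ a ∈ S ∧ τ a ∈ T) :
    (fun a => f (ξ a) (τ a) - f x₀ (τ a) - (ξ a - x₀) * fx x₀ t₀) =o[l] (fun a => ξ a - x₀) := by
  refine isLittleO_iff.2 fun ε hε => ?_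
  obtain ⟨δ, hδ, hclose⟩ := Metric.continuousWithinAt_iff.1 hfxc ε hε
  filter_upwards [hmem, hξ (Metric.ball_mem_nhds x₀ hδ), hτ (Metric.ball_mem_nhds t₀ hδ)]
    with a ⟨hξS, hτT⟩ hξδ hτδ
  have hC : Convex ℝ (S ∩ Metric.ball x₀ δ) := hS.inter (convex_ball x₀ δ)
  simpa [Real.norm_eq_abs] using hC.abs_sub_sub_mul_le_of_hasDerivWithinAt
    (fun x hx => (hfx x hx.1 _ hτT).mono inter_subset_left)
    (fun x hx => (Real.dist_eq _ _ ▸ hclose (mk_mem_prod hx.1 hτT)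
      (by simpa [Prod.dist_eq] using ⟨hx.2, hτδ⟩)).le)
    ⟨hx₀, Metric.mem_ball_self hδ⟩ ⟨hξS, hξδ⟩

theorem hasDerivWithinAt_comp₂_of_partialDeriv {f fx : ℝ → ℝ → ℝ} {S T u : Set ℝ}
    (hS : Convex ℝ S) (hfx : ∀ x ∈ S, ∀ t ∈ T, HasDerivWithinAt (f · t) (fx x t) S x)
    {ξ τ : ℝ → ℝ} {s₀ c d ft : ℝ}
    (hfxc : ContinuousWithinAt (fun q : ℝ × ℝ => fx q.1 q.2) (S ×ˢ T) (ξ s₀, τ s₀))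
    (hft : HasDerivWithinAt (f (ξ s₀) ·) ft T (τ s₀))
    (hξ : HasDerivWithinAt ξ c u s₀) (hτ : HasDerivWithinAt τ d u s₀)
    (hs₀ : s₀ ∈ u) (hmaps : ∀ s ∈ u, ξ s ∈ S ∧ τ s ∈ T) :
    HasDerivWithinAt (fun s => f (ξ s) (τ s)) (c * fx (ξ s₀) (τ s₀) + d * ft) u s₀ := by
  have hx_part : HasDerivWithinAt (fun s => f (ξ s) (τ s) - f (ξ s₀) (τ s))
      (c * fx (ξ s₀) (τ s₀)) u s₀ := by
    have hlin := isLittleO_sub_sub_mul_partialDeriv hS (hmaps s₀ hs₀).1 hfx hfxc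
      hξ.continuousWithinAt.tendsto hτ.continuousWithinAt.tendsto
      (eventually_mem_nhdsWithin.mono hmaps)
    have hξlin := (hasDerivWithinAt_iff_isLittleO.1 hξ).const_mul_left (fx (ξ s₀) (τ s₀))
    refine hasDerivWithinAt_iff_isLittleO.2
      ((hlin.trans_isBigO hξ.hasFDerivWithinAt.isBigO_sub).add hξlin |>.congr_left fun s => ?_)
    simp only [smul_eq_mul, sub_self]
    ring
  have ht_part : HasDerivWithinAt (fun s => f (ξ s₀) (τ s)) (ft * d) u s₀ :=
    hft.comp s₀ hτ fun s hs => (hmaps s hs).2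
  simpa only [sub_add_cancel, mul_comm ft d] using hx_part.fun_add ht_part

theorem ContinuousOn.hasDerivWithinAt_integral_Icc {E : Type*} [NormedAddCommGroup E]
    [NormedSpace ℝ E] [CompleteSpace E] {f : ℝ → E} {a b x : ℝ}
    (hf : ContinuousOn f (Icc a b)) (hx : x ∈ Icc a b) :
    HasDerivWithinAt (fun u => ∫ y in a..u, f y) (f x) (Icc a b) x := by
  have : Fact (x ∈ Icc a b) := ⟨hx⟩
  exact integral_hasDerivWithinAt_right
    ((hf.mono (Icc_subset_Icc_right hx.2)).intervalIntegrable_of_Icc hx.1)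
    (hf.stronglyMeasurableAtFilter_nhdsWithin measurableSet_Icc x) (hf x hx)

theorem hasDerivWithinAt_intervalIntegral_of_partialDeriv {φ φs : ℝ → ℝ → ℝ} {u : Set ℝ}
    {a b σ : ℝ} (hu : Convex ℝ u) (hσ : σ ∈ u) (hab : a ≤ b)
    (hφ : ∀ s ∈ u, IntervalIntegrable (φ s) volume a b)
    (hφs : ContinuousOn (fun q : ℝ × ℝ => φs q.1 q.2) (u ×ˢ Icc a b))
    (hderiv : ∀ s ∈ u, ∀ y ∈ Icc a b, HasDerivWithinAt (φ · y) (φs s y) u s) :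
    HasDerivWithinAt (fun s => ∫ y in a..b, φ s y) (∫ y in a..b, φs σ y) u σ := by
  refine hasDerivWithinAt_iff_isLittleO.2 (isLittleO_iff.2 fun ε hε => ?_)
  set ε' := ε / (b - a + 1)
  have hε' : 0 < ε' := div_pos hε (by linarith)
  obtain ⟨v, hv, hvε⟩ :=
    isCompact_Icc.mem_uniformity_of_prod hφs hσ (Metric.dist_mem_uniformity hε')
  obtain ⟨δ, hδ, hball⟩ := Metric.mem_nhdsWithin_iff.1 hv
  have hC : Convex ℝ (Metric.ball σ δ ∩ u) := (convex_ball σ δ).inter hu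
  filter_upwards [inter_mem_nhdsWithin u (Metric.ball_mem_nhds σ hδ)] with s ⟨hsu, hsδ⟩
  -- uniform closeness of `φs · y` to `φs σ y` makes the mean value estimate uniform in `y`
  have hpt : ∀ y ∈ Icc a b, |φ s y - φ σ y - (s - σ) * φs σ y| ≤ ε' * |s - σ| := fun y hy =>
    hC.abs_sub_sub_mul_le_of_hasDerivWithinAt
      (fun r hr => (hderiv r hr.2 y hy).mono inter_subset_right)
      (fun r hr => (hvε r (hball hr) y hy).le) ⟨Metric.mem_ball_self hδ, hσ⟩ ⟨hsδ, hsu⟩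
  have hφsσ : IntervalIntegrable (φs σ) volume a b :=
    (hφs.comp (continuousOn_const.prodMk continuousOn_id) fun y hy => ⟨hσ, hy⟩)
      |>.intervalIntegrable_of_Icc hab
  calc ‖(∫ y in a..b, φ s y) - (∫ y in a..b, φ σ y) - (s - σ) • ∫ y in a..b, φs σ y‖
      = ‖∫ y in a..b, (φ s y - φ σ y - (s - σ) * φs σ y)‖ := by
        rw [integral_sub ((hφ s hsu).sub (hφ σ hσ)) (hφsσ.const_mul _),
          integral_sub (hφ s hsu) (hφ σ hσ), intervalIntegral.integral_const_mul, smul_eq_mul]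
    _ ≤ ε' * |s - σ| * |b - a| := norm_integral_le_of_norm_le_const fun y hy =>
        hpt y (Ioc_subset_Icc_self (uIoc_of_le hab ▸ hy))
    _ ≤ ε * ‖s - σ‖ := by
        rw [Real.norm_eq_abs, abs_of_nonneg (sub_nonneg.2 hab), mul_right_comm]
        refine mul_le_mul_of_nonneg_right ?_ (abs_nonneg _)
        rw [div_mul_eq_mul_div, div_le_iff₀ (by linarith)]
        nlinarith

theorem hasDerivWithinAt_intervalIntegral_upper_of_partialDeriv {φ φs : ℝ → ℝ → ℝ} {ξ : ℝ → ℝ}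
    {u : Set ℝ} {a b σ c : ℝ} (hu : Convex ℝ u) (hσ : σ ∈ u)
    (hφ : ContinuousOn (fun q : ℝ × ℝ => φ q.1 q.2) (u ×ˢ Icc a b))
    (hφs : ContinuousOn (fun q : ℝ × ℝ => φs q.1 q.2) (u ×ˢ Icc a (ξ σ)))
    (hderiv : ∀ s ∈ u, ∀ y ∈ Icc a (ξ σ), HasDerivWithinAt (φ · y) (φs s y) u s)
    (hξ : HasDerivWithinAt ξ c u σ) (hξmaps : ∀ s ∈ u, ξ s ∈ Icc a b) :
    HasDerivWithinAt (fun s => ∫ y in a..ξ s, φ s y)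
      (c * φ σ (ξ σ) + ∫ y in a..ξ σ, φs σ y) u σ := by
  have hslice : ∀ s ∈ u, ContinuousOn (φ s) (Icc a b) := fun s hs =>
    hφ.comp (continuousOn_const.prodMk continuousOn_id) fun y hy => ⟨hs, hy⟩
  have hξσ := hξmaps σ hσ
  simpa using hasDerivWithinAt_comp₂_of_partialDeriv (f := fun x s => ∫ y in a..x, φ s y)
    (fx := fun x s => φ s x) (τ := id) (convex_Icc a b)
    (fun x hx s hs => (hslice s hs).hasDerivWithinAt_integral_Icc hx)
    ((hφ.comp continuous_swap.continuousOn fun q hq => ⟨hq.2, hq.1⟩) _ ⟨hξσ, hσ⟩)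
    (hasDerivWithinAt_intervalIntegral_of_partialDeriv hu hσ hξσ.1
      (fun s hs => ((hslice s hs).mono (Icc_subset_Icc_right hξσ.2)).intervalIntegrable_of_Icc
        hξσ.1) hφs hderiv)
    hξ (hasDerivWithinAt_id σ u) hσ fun s hs => ⟨hξmaps s hs, hs⟩

theorem continuousOn_intervalIntegral_of_continuousOn {φ : ℝ → ℝ → ℝ} {ξ : ℝ → ℝ}
    {s₀ s₁ a : ℝ} (hξ : ContinuousOn ξ (Icc s₀ s₁)) (haξ : ∀ s ∈ Icc s₀ s₁, a ≤ ξ s)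
    (hφ : ContinuousOn (fun q : ℝ × ℝ => φ q.1 q.2) {q | q.1 ∈ Icc s₀ s₁ ∧ q.2 ∈ Icc a (ξ q.1)}) :
    ContinuousOn (fun s => ∫ y in a..ξ s, φ s y) (Icc s₀ s₁) := by
  rcases lt_or_ge s₁ s₀ with h | h
  · simp [Icc_eq_empty_of_lt h]
  -- clamping `s` to `[s₀, s₁]` and `y` to `[a, ξ s]` extends `φ` continuously to the plane
  set π : ℝ → ℝ := fun s => projIcc s₀ s₁ h s
  have hπ : Continuous π := by fun_prop
  have hξπ : Continuous fun s => ξ (π s) := hξ.comp_continuous hπ fun s => Subtype.prop _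
  have hψ : Continuous fun q : ℝ × ℝ => φ (π q.1) (max a (min q.2 (ξ (π q.1)))) :=
    hφ.comp_continuous (f := fun q : ℝ × ℝ => (π q.1, max a (min q.2 (ξ (π q.1)))))
      ((hπ.comp continuous_fst).prodMk (continuous_const.max
        (continuous_snd.min (hξπ.comp continuous_fst)))) fun q => ⟨Subtype.prop _, le_max_left _ _,
        max_le (haξ _ (Subtype.prop _)) (min_le_right _ _)⟩
  refine (continuous_parametric_intervalIntegral_of_continuous (μ := volume) (a₀ := a)
    (f := fun s y => φ (π s) (max a (min y (ξ (π s))))) hψ hξπ).continuousOn.congr fun s hs => ?_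
  simp only [π, projIcc_of_mem h hs]
  refine integral_congr fun y hy => ?_
  rw [uIcc_of_le (haξ s hs)] at hy
  rw [min_eq_left hy.2, max_eq_right hy.1]

theorem integral_kernel_transport_identity {K Kx Ky L u ux ut v : ℝ → ℝ} {x q c e e' : ℝ}
    (hx : 0 ≤ x) (hK : ∀ y ∈ Icc 0 x, HasDerivWithinAt K (Ky y) (Icc 0 x) y)
    (hu : ∀ y ∈ Icc 0 x, HasDerivWithinAt u (ux y) (Icc 0 x) y)
    (hKy : ContinuousOn Ky (Icc 0 x)) (hux : ContinuousOn ux (Icc 0 x))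
    (hL : ContinuousOn L (Icc 0 x)) (hv : ContinuousOn v (Icc 0 x))
    (hKpde : ∀ y ∈ Icc 0 x, q * Kx y + c * Ky y = e * L y)
    (hupde : ∀ y ∈ Icc 0 x, ut y = c * ux y + e' * v y) :
    ∫ y in 0..x, (q * Kx y * u y - K y * ut y)
      = e * (∫ y in 0..x, L y * u y) - c * (K x * u x - K 0 * u 0)
        - e' * ∫ y in 0..x, K y * v y := by
  have hKc : ContinuousOn K (Icc 0 x) := fun y hy => (hK y hy).continuousWithinAt
  have huc : ContinuousOn u (Icc 0 x) := fun y hy => (hu y hy).continuousWithinAt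
  have hint : ∀ {f : ℝ → ℝ}, ContinuousOn f (Icc 0 x) → IntervalIntegrable f volume 0 x :=
    fun hf => hf.intervalIntegrable_of_Icc hx
  have hparts : ∫ y in 0..x, (Ky y * u y + K y * ux y) = K x * u x - K 0 * u 0 :=
    integral_deriv_mul_eq_sub_of_hasDerivWithinAt (by rwa [uIcc_of_le hx])
      (by rwa [uIcc_of_le hx]) (hint hKy) (hint hux)
  have hpt : EqOn (fun y => q * Kx y * u y - K y * ut y)
      (fun y => e * (L y * u y) - c * (Ky y * u y + K y * ux y) - e' * (K y * v y))
      (uIcc 0 x) := fun y hy => by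
    rw [uIcc_of_le hx] at hy
    simp only [hupde y hy]
    linear_combination u y * hKpde y hy
  have hLu : IntervalIntegrable (fun y => L y * u y) volume 0 x := hint (hL.mul huc)
  have hparts_int : IntervalIntegrable (fun y => Ky y * u y + K y * ux y) volume 0 x :=
    hint ((hKy.mul huc).add (hKc.mul hux))
  have hKv : IntervalIntegrable (fun y => K y * v y) volume 0 x := hint (hKc.mul hv)
  rw [integral_congr hpt, intervalIntegral.integral_sub ((hLu.const_mul e).sub
      (hparts_int.const_mul c)) (hKv.const_mul e'),
    intervalIntegral.integral_sub (hLu.const_mul e) (hparts_int.const_mul c),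
    intervalIntegral.integral_const_mul, intervalIntegral.integral_const_mul,
    intervalIntegral.integral_const_mul, hparts]

theorem ContinuousLinearMap.eq_exp_smul_apply_of_hasDerivAt {E : Type*} [NormedAddCommGroup E]
    [NormedSpace ℝ E] [CompleteSpace E] (A : E →L[ℝ] E) {b Y : ℝ → E} {T t : ℝ}
    (hb : ContinuousOn b (Icc 0 T)) (hY : ∀ s ∈ Icc 0 T, HasDerivAt Y (A (Y s) + b s) s)
    (ht : t ∈ Icc 0 T) :
    Y t = NormedSpace.exp (t • A) (Y 0 + ∫ s in 0..t, NormedSpace.exp ((-s) • A) (b s)) := by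
  set U : ℝ → E →L[ℝ] E := fun s => NormedSpace.exp ((-s) • A)
  have hU : ∀ s, HasDerivAt U (-(A * U s)) s := fun s => by
    simpa [U, Function.comp_def] using
      (hasDerivAt_exp_smul_const' A (-s)).scomp s (hasDerivAt_neg s)
  have hUY : ∀ s ∈ Icc 0 T, HasDerivAt (fun s => U s (Y s)) (U s (b s)) s := fun s hs => by
    refine ((hU s).clm_apply (hY s hs)).congr_deriv ?_
    have hcomm : Commute A (U s) := ((Commute.refl A).smul_right (-s)).exp_right
    rw [map_add, hcomm.eq]
    simp
  have hUb : ContinuousOn (fun s => U s (b s)) (Icc 0 T) :=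
    (continuous_iff_continuousAt.2 fun s => (hU s).continuousAt).continuousOn.clm_apply hb
  have hV : ∀ s ∈ Icc 0 T,
      HasDerivWithinAt (fun s => U s (Y s) - ∫ r in 0..s, U r (b r)) 0 (Icc 0 T) s :=
    fun s hs => ((hUY s hs).hasDerivWithinAt.fun_sub
      (hUb.hasDerivWithinAt_integral_Icc hs)).congr_deriv (sub_self _)
  have hconst := constant_of_has_deriv_right_zero (fun s hs => (hV s hs).continuousWithinAt)
    (fun s hs => (hV s (Ico_subset_Icc_self hs)).mono_of_mem_nhdsWithin
      (mem_of_superset (Icc_mem_nhdsGE hs.2) (Icc_subset_Icc_left hs.1))) t ht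
  have hinv : NormedSpace.exp (t • A) * U t = 1 := by
    -- `NormedSpace.exp_add_of_commute` is stated for normed `ℚ`-algebras
    let _ : NormedAlgebra ℚ (E →L[ℝ] E) := .restrictScalars ℚ ℝ _
    rw [← NormedSpace.exp_add_of_commute (((Commute.refl A).smul_left t).smul_right (-t)),
      ← add_smul, add_neg_cancel, zero_smul, NormedSpace.exp_zero]
  simp only [U, neg_zero, zero_smul, NormedSpace.exp_zero, intervalIntegral.integral_same,
    sub_zero, one_apply_eq_self] at hconst
  rw [← sub_eq_iff_eq_add.1 hconst]
  exact (DFunLike.congr_fun hinv (Y t)).symm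

-- `NormedSpace.map_exp` needs some norm on matrices; any choice gives the same `exp`.
open scoped Matrix.Norms.Operator in
theorem Matrix.exp_smul_mulVec {ι : Type*} [Fintype ι] [DecidableEq ι] (A : Matrix ι ι ℝ)
    (t : ℝ) (v : ι → ℝ) :
    NormedSpace.exp (t • A) *ᵥ v
      = NormedSpace.exp (t • LinearMap.toContinuousLinearMap (Matrix.toLin' A)) v := by
  let _ : NormedAlgebra ℚ ((ι → ℝ) →L[ℝ] ι → ℝ) := .restrictScalars ℚ ℝ _
  let f : ((ι → ℝ) →L[ℝ] ι → ℝ) →+* Matrix ι ι ℝ :=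
    LinearMap.toMatrixAlgEquiv'.toRingEquiv.toRingHom.comp
      ContinuousLinearMap.toLinearMapRingHom
  have hf : Continuous f :=
    (LinearMap.toMatrix'.toLinearMap ∘ₗ ContinuousLinearMap.coeLM ℝ).continuous_of_finiteDimensional
  have hfL : ∀ X v, f X *ᵥ v = X v := fun X v => LinearMap.toMatrix'_mulVec _ v
  have hA : f (t • LinearMap.toContinuousLinearMap (Matrix.toLin' A)) = t • A := by
    simp only [f, RingHom.comp_apply]
    exact congrArg (t • ·) (LinearMap.toMatrixAlgEquiv'_toLinAlgEquiv' A)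
  calc NormedSpace.exp (t • A) *ᵥ v
      = f (NormedSpace.exp (t • LinearMap.toContinuousLinearMap (Matrix.toLin' A))) *ᵥ v := by
        rw [NormedSpace.map_exp f hf, hA]
        rfl
    _ = _ := hfL _ v

theorem state_div_eq_exp_mulVec_add_integral {ι : Type*} [Fintype ι] [DecidableEq ι]
    (A : Matrix ι ι ℝ) (B : ι → ℝ) {Y : ℝ → ι → ℝ} {u β : ℝ → ℝ} {c : ℝ} (hc : 0 < c)
    (hu : ContinuousOn u (Icc 0 (1 / c)))
    (hY : ∀ t ∈ Icc 0 (1 / c), HasDerivAt Y (A *ᵥ Y t + u t • B) t)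
    (hβ : ∀ t ∈ Icc 0 (1 / c), u t = β (c * t)) {ς : ℝ} (hς : ς ∈ Icc (0 : ℝ) 1) :
    Y (ς / c) = NormedSpace.exp ((ς / c) • A) *ᵥ Y 0
      + (1 / c) • NormedSpace.exp ((ς / c) • A) *ᵥ
        ∫ x in 0..ς, β x • NormedSpace.exp ((-(x / c)) • A) *ᵥ B := by
  have ht : ς / c ∈ Icc 0 (1 / c) :=
    ⟨div_nonneg hς.1 hc.le, div_le_div_of_nonneg_right hς.2 hc.le⟩
  have hvoc := (LinearMap.toContinuousLinearMap (Matrix.toLin' A)).eq_exp_smul_apply_of_hasDerivAt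
    (b := fun s => u s • B) (hu.smul continuousOn_const) (fun s hs => by simpa using hY s hs) ht
  have hrescale : ∫ s in 0..ς / c, β (c * s) • NormedSpace.exp ((-s) • A) *ᵥ B
      = (1 / c) • ∫ x in 0..ς, β x • NormedSpace.exp ((-(x / c)) • A) *ᵥ B := by
    have h := intervalIntegral.integral_comp_mul_left (a := 0) (b := ς / c)
      (fun x => β x • NormedSpace.exp ((-(x / c)) • A) *ᵥ B) hc.ne'
    simp only [mul_zero, mul_div_cancel₀ _ hc.ne', mul_div_cancel_left₀ _ hc.ne'] at h
    rw [one_div, ← h]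
  rw [hvoc, ← Matrix.exp_smul_mulVec, Matrix.mulVec_add, ← Matrix.mulVec_smul, ← hrescale]
  congr 2
  refine intervalIntegral.integral_congr fun s hs => ?_
  rw [uIcc_of_le ht.1] at hs
  rw [← Matrix.exp_smul_mulVec, Matrix.mulVec_smul, hβ s ⟨hs.1, hs.2.trans ht.2⟩]

def triangle : Set (ℝ × ℝ) := {q | 0 ≤ q.2 ∧ q.2 ≤ q.1 ∧ q.1 ≤ 1}

structure IsC1OnTriangle (K Kx Ky : ℝ → ℝ → ℝ) : Prop where
  continuousOn : ContinuousOn (fun q : ℝ × ℝ => K q.1 q.2) triangle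
  hasDerivWithinAt_fst : ∀ x y, 0 ≤ y → y ≤ x → x ≤ 1 →
    HasDerivWithinAt (K · y) (Kx x y) (Icc y 1) x
  hasDerivWithinAt_snd : ∀ x y, 0 ≤ y → y ≤ x → x ≤ 1 →
    HasDerivWithinAt (K x ·) (Ky x y) (Icc 0 x) y
  continuousOn_fst : ContinuousOn (fun q : ℝ × ℝ => Kx q.1 q.2) triangle
  continuousOn_snd : ContinuousOn (fun q : ℝ × ℝ => Ky q.1 q.2) triangle

structure IsC1OnStrip (u ux ut : ℝ → ℝ → ℝ) (T : ℝ) : Prop where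
  continuousOn : ContinuousOn (fun q : ℝ × ℝ => u q.1 q.2) (Icc 0 1 ×ˢ Icc 0 T)
  hasDerivWithinAt_fst : ∀ x ∈ Icc (0 : ℝ) 1, ∀ t ∈ Icc 0 T,
    HasDerivWithinAt (u · t) (ux x t) (Icc 0 1) x
  hasDerivWithinAt_snd : ∀ x ∈ Icc (0 : ℝ) 1, ∀ t ∈ Icc 0 T,
    HasDerivWithinAt (u x ·) (ut x t) (Icc 0 T) t
  continuousOn_fst : ContinuousOn (fun q : ℝ × ℝ => ux q.1 q.2) (Icc 0 1 ×ˢ Icc 0 T)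
  continuousOn_snd : ContinuousOn (fun q : ℝ × ℝ => ut q.1 q.2) (Icc 0 1 ×ˢ Icc 0 T)

theorem continuousOn_slice_of_triangle {f : ℝ → ℝ → ℝ}
    (hf : ContinuousOn (fun q : ℝ × ℝ => f q.1 q.2) triangle) {x : ℝ} (hx : x ≤ 1) :
    ContinuousOn (f x) (Icc 0 x) :=
  hf.comp (continuousOn_const.prodMk continuousOn_id) fun _ hy => ⟨hy.1, hy.2, hx⟩

theorem continuousOn_slice_of_strip {f : ℝ → ℝ → ℝ} {T : ℝ}
    (hf : ContinuousOn (fun q : ℝ × ℝ => f q.1 q.2) (Icc 0 1 ×ˢ Icc 0 T)) {x τ : ℝ}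
    (hx : x ≤ 1) (hτ : τ ∈ Icc 0 T) : ContinuousOn (f · τ) (Icc 0 x) :=
  hf.comp (continuousOn_id.prodMk continuousOn_const) fun _ hy => ⟨⟨hy.1, hy.2.trans hx⟩, hτ⟩

theorem IsC1OnTriangle.integral_transport_identity {K Kx Ky L u ux ut v : ℝ → ℝ → ℝ}
    {T x τ q c e e' : ℝ} (hK : IsC1OnTriangle K Kx Ky) (hu : IsC1OnStrip u ux ut T)
    (hL : ContinuousOn (fun q : ℝ × ℝ => L q.1 q.2) triangle)
    (hv : ContinuousOn (fun q : ℝ × ℝ => v q.1 q.2) (Icc 0 1 ×ˢ Icc 0 T))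
    (hx : x ∈ Icc (0 : ℝ) 1) (hτ : τ ∈ Icc 0 T)
    (hKpde : ∀ y ∈ Icc 0 x, q * Kx x y + c * Ky x y = e * L x y)
    (hupde : ∀ y ∈ Icc 0 x, ut y τ = c * ux y τ + e' * v y τ) :
    ∫ y in 0..x, (q * Kx x y * u y τ - K x y * ut y τ)
      = e * (∫ y in 0..x, L x y * u y τ) - c * (K x x * u x τ - K x 0 * u 0 τ)
        - e' * ∫ y in 0..x, K x y * v y τ :=
  integral_kernel_transport_identity hx.1
    (fun y hy => hK.hasDerivWithinAt_snd x y hy.1 hy.2 hx.2)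
    (fun y hy => (hu.hasDerivWithinAt_fst y ⟨hy.1, hy.2.trans hx.2⟩ τ hτ).mono
      (Icc_subset_Icc_right hx.2))
    (continuousOn_slice_of_triangle hK.continuousOn_snd hx.2)
    (continuousOn_slice_of_strip hu.continuousOn_fst hx.2 hτ)
    (continuousOn_slice_of_triangle hL hx.2) (continuousOn_slice_of_strip hv hx.2 hτ)
    hKpde hupde

theorem hasDerivWithinAt_kernel_mul_along_characteristic {K Kx Ky u ux ut : ℝ → ℝ → ℝ}
    {c T t σ s y : ℝ} (hK : IsC1OnTriangle K Kx Ky) (hu : IsC1OnStrip u ux ut T)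
    (hc : 0 ≤ c) (hct : c * t ≤ 1) (htT : t ≤ T) (hσ : 0 ≤ σ) (hs : s ∈ Icc σ t)
    (hy : y ∈ Icc 0 (c * σ)) :
    HasDerivWithinAt (fun r => K (c * r) y * u y (t - r))
      (c * Kx (c * s) y * u y (t - s) - K (c * s) y * ut y (t - s)) (Icc σ t) s := by
  have hcs : ∀ r ∈ Icc σ t, y ≤ c * r ∧ c * r ≤ 1 := fun r hr =>
    ⟨hy.2.trans (mul_le_mul_of_nonneg_left hr.1 hc),
      (mul_le_mul_of_nonneg_left hr.2 hc).trans hct⟩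
  have hts : ∀ r ∈ Icc σ t, t - r ∈ Icc 0 T := fun r hr =>
    ⟨sub_nonneg.2 hr.2, by linarith [hr.1]⟩
  have hKr : HasDerivWithinAt (fun r => K (c * r) y) (Kx (c * s) y * c) (Icc σ t) s :=
    (hK.hasDerivWithinAt_fst _ y hy.1 (hcs s hs).1 (hcs s hs).2).comp s
      (by simpa using (hasDerivWithinAt_id s (Icc σ t)).const_mul c) hcs
  have hur : HasDerivWithinAt (fun r => u y (t - r)) (ut y (t - s) * (-1)) (Icc σ t) s :=
    (hu.hasDerivWithinAt_snd y ⟨hy.1, (hcs s hs).1.trans (hcs s hs).2⟩ _ (hts s hs)).comp s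
      ((hasDerivWithinAt_id s (Icc σ t)).const_sub t) hts
  exact (hKr.fun_mul hur).congr_deriv (by ring)

theorem hasDerivWithinAt_kernelIntegral_along_characteristic {K Kx Ky u ux ut : ℝ → ℝ → ℝ}
    {c T t σ : ℝ} (hK : IsC1OnTriangle K Kx Ky) (hu : IsC1OnStrip u ux ut T)
    (hc : 0 ≤ c) (hct : c * t ≤ 1) (htT : t ≤ T) (hσ : σ ∈ Icc 0 t) :
    HasDerivWithinAt (fun s => ∫ y in 0..c * s, K (c * s) y * u y (t - s))
      (c * (K (c * σ) (c * σ) * u (c * σ) (t - σ)) + ∫ y in 0..c * σ,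
        (c * Kx (c * σ) y * u y (t - σ) - K (c * σ) y * ut y (t - σ))) (Icc σ t) σ := by
  have hcs : ∀ s ∈ Icc σ t, c * σ ≤ c * s ∧ c * s ≤ 1 := fun s hs =>
    ⟨mul_le_mul_of_nonneg_left hs.1 hc, (mul_le_mul_of_nonneg_left hs.2 hc).trans hct⟩
  have hc0 : ∀ s ∈ Icc σ t, 0 ≤ c * s := fun s hs => mul_nonneg hc (hσ.1.trans hs.1)
  have hts : ∀ s ∈ Icc σ t, t - s ∈ Icc 0 T := fun s hs =>
    ⟨sub_nonneg.2 hs.2, by linarith [hσ.1, hs.1]⟩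
  have hKt : ∀ q ∈ Icc σ t ×ˢ Icc 0 (c * σ), (c * q.1, q.2) ∈ triangle := fun q hq =>
    ⟨hq.2.1, hq.2.2.trans (hcs _ hq.1).1, (hcs _ hq.1).2⟩
  have hus : ∀ q ∈ Icc σ t ×ˢ Icc 0 (c * σ), (q.2, t - q.1) ∈ Icc (0 : ℝ) 1 ×ˢ Icc 0 T :=
    fun q hq => ⟨⟨hq.2.1, hq.2.2.trans (hcs σ (left_mem_Icc.2 hσ.2)).2⟩, hts _ hq.1⟩
  -- `min y (c * s)` extends the kernel continuously above the diagonal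
  have hφ : ContinuousOn (fun q : ℝ × ℝ => K (c * q.1) (min q.2 (c * q.1)) * u q.2 (t - q.1))
      (Icc σ t ×ˢ Icc 0 1) :=
    (hK.continuousOn.comp (f := fun q : ℝ × ℝ => (c * q.1, min q.2 (c * q.1))) (by fun_prop)
      fun q hq => ⟨le_min hq.2.1 (hc0 _ hq.1), min_le_right _ _, (hcs _ hq.1).2⟩).mul
    (hu.continuousOn.comp (f := fun q : ℝ × ℝ => (q.2, t - q.1)) (by fun_prop)
      fun q hq => ⟨hq.2, hts _ hq.1⟩)
  have hmapK : ContinuousOn (fun q : ℝ × ℝ => (c * q.1, q.2)) (Icc σ t ×ˢ Icc 0 (c * σ)) := by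
    fun_prop
  have hmapu : ContinuousOn (fun q : ℝ × ℝ => (q.2, t - q.1)) (Icc σ t ×ˢ Icc 0 (c * σ)) := by
    fun_prop
  have key := hasDerivWithinAt_intervalIntegral_upper_of_partialDeriv
    (φ := fun s y => K (c * s) (min y (c * s)) * u y (t - s))
    (φs := fun s y => c * Kx (c * s) y * u y (t - s) - K (c * s) y * ut y (t - s))
    (convex_Icc σ t) (left_mem_Icc.2 hσ.2) hφ
    ((continuousOn_const.mul (hK.continuousOn_fst.comp hmapK hKt)).mul
      (hu.continuousOn.comp hmapu hus) |>.sub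
      ((hK.continuousOn.comp hmapK hKt).mul (hu.continuousOn_snd.comp hmapu hus)))
    (fun s hs y hy => (hasDerivWithinAt_kernel_mul_along_characteristic hK hu hc hct htT hσ.1
      hs hy).congr_of_mem (fun r hr => by rw [min_eq_left (hy.2.trans (hcs r hr).1)]) hs)
    (by simpa using (hasDerivWithinAt_id σ (Icc σ t)).const_mul c)
    fun s hs => ⟨hc0 s hs, (hcs s hs).2⟩
  have hext : ∀ s ∈ Icc σ t, ∫ y in 0..c * s, K (c * s) (min y (c * s)) * u y (t - s)
      = ∫ y in 0..c * s, K (c * s) y * u y (t - s) := fun s hs =>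
    integral_congr fun y hy => by rw [min_eq_left (uIcc_of_le (hc0 s hs) ▸ hy).2]
  refine (key.congr_of_mem (fun s hs => (hext s hs).symm) (left_mem_Icc.2 hσ.2)).congr_deriv ?_
  rw [min_self]

structure IsBacksteppingKernel (q1 q2 d1 d2 p : ℝ) (F H Fx Fy Hx Hy : ℝ → ℝ → ℝ) : Prop where
  F_isC1 : IsC1OnTriangle F Fx Fy
  H_isC1 : IsC1OnTriangle H Hx Hy
  F_pde : ∀ x y, 0 ≤ y → y ≤ x → x ≤ 1 → q2 * Fx x y - q1 * Fy x y = d2 * H x y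
  H_pde : ∀ x y, 0 ≤ y → y ≤ x → x ≤ 1 → q2 * Hx x y + q2 * Hy x y = d1 * F x y
  F_diag : ∀ x ∈ Icc (0 : ℝ) 1, F x x = -d2 / (q1 + q2)
  H_bdry : ∀ x ∈ Icc (0 : ℝ) 1, H x 0 = (q1 * p / q2) * F x 0

structure IsHyperbolicSolution (q1 q2 d1 d2 p T : ℝ) (z w zx zt wx wt : ℝ → ℝ → ℝ) : Prop where
  z_isC1 : IsC1OnStrip z zx zt T
  w_isC1 : IsC1OnStrip w wx wt T
  z_pde : ∀ x ∈ Icc (0 : ℝ) 1, ∀ t ∈ Icc 0 T, zt x t = -q1 * zx x t + d1 * w x t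
  w_pde : ∀ x ∈ Icc (0 : ℝ) 1, ∀ t ∈ Icc 0 T, wt x t = q2 * wx x t + d2 * z x t
  bdry : ∀ t ∈ Icc 0 T, z 0 t = p * w 0 t

noncomputable def backstepping (F H z w : ℝ → ℝ → ℝ) (x t : ℝ) : ℝ :=
  w x t - (∫ y in 0..x, F x y * z y t) - ∫ y in 0..x, H x y * w y t

theorem hasDerivWithinAt_backstepping_along_characteristic {q1 q2 d1 d2 p : ℝ}
    {F H Fx Fy Hx Hy z w zx zt wx wt : ℝ → ℝ → ℝ} (hq1 : 0 < q1) (hq2 : 0 < q2)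
    (hk : IsBacksteppingKernel q1 q2 d1 d2 p F H Fx Fy Hx Hy)
    (hs : IsHyperbolicSolution q1 q2 d1 d2 p (1 / q2) z w zx zt wx wt)
    {t σ : ℝ} (ht : t ∈ Icc 0 (1 / q2)) (hσ : σ ∈ Icc 0 t) :
    HasDerivWithinAt (fun s => backstepping F H z w (q2 * s) (t - s)) 0 (Icc σ t) σ := by
  have hqt : q2 * t ≤ 1 := by
    simpa [hq2.ne'] using mul_le_mul_of_nonneg_left ht.2 hq2.le
  have hx : q2 * σ ∈ Icc (0 : ℝ) 1 :=
    ⟨mul_nonneg hq2.le hσ.1, (mul_le_mul_of_nonneg_left hσ.2 hq2.le).trans hqt⟩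
  have hτ : t - σ ∈ Icc 0 (1 / q2) := ⟨sub_nonneg.2 hσ.2, by linarith [hσ.1, ht.2]⟩
  have hw_char : HasDerivWithinAt (fun s => w (q2 * s) (t - s))
      (q2 * wx (q2 * σ) (t - σ) + -1 * wt (q2 * σ) (t - σ)) (Icc σ t) σ :=
    hasDerivWithinAt_comp₂_of_partialDeriv (convex_Icc 0 1) hs.w_isC1.hasDerivWithinAt_fst
      (hs.w_isC1.continuousOn_fst _ ⟨hx, hτ⟩)
      (hs.w_isC1.hasDerivWithinAt_snd _ hx _ hτ)
      (by simpa using (hasDerivWithinAt_id σ (Icc σ t)).const_mul q2)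
      (by simpa using (hasDerivWithinAt_id σ (Icc σ t)).const_sub t) (left_mem_Icc.2 hσ.2)
      fun s hs => ⟨⟨mul_nonneg hq2.le (hσ.1.trans hs.1),
        (mul_le_mul_of_nonneg_left hs.2 hq2.le).trans hqt⟩,
        ⟨sub_nonneg.2 hs.2, by linarith [hσ.1, hs.1, ht.2]⟩⟩
  have hFz := hasDerivWithinAt_kernelIntegral_along_characteristic hk.F_isC1 hs.z_isC1
    hq2.le hqt ht.2 hσ
  have hHw := hasDerivWithinAt_kernelIntegral_along_characteristic hk.H_isC1 hs.w_isC1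
    hq2.le hqt ht.2 hσ
  have hIF := hk.F_isC1.integral_transport_identity hs.z_isC1 hk.H_isC1.continuousOn
    hs.w_isC1.continuousOn hx hτ (q := q2) (c := -q1) (e := d2) (e' := d1)
    (fun y hy => by linarith [hk.F_pde _ y hy.1 hy.2 hx.2])
    (fun y hy => hs.z_pde y ⟨hy.1, hy.2.trans hx.2⟩ _ hτ)
  have hIH := hk.H_isC1.integral_transport_identity hs.w_isC1 hk.F_isC1.continuousOn
    hs.z_isC1.continuousOn hx hτ (q := q2) (c := q2) (e := d1) (e' := d2)
    (fun y hy => hk.H_pde _ y hy.1 hy.2 hx.2)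
    (fun y hy => hs.w_pde y ⟨hy.1, hy.2.trans hx.2⟩ _ hτ)
  refine ((hw_char.fun_sub hFz).fun_sub hHw).congr_deriv ?_
  rw [hIF, hIH, hs.w_pde _ hx _ hτ, hk.F_diag _ hx, hk.H_bdry _ hx, hs.bdry _ hτ]
  field_simp
  ring

theorem backstepping_transport {q1 q2 d1 d2 p : ℝ}
    {F H Fx Fy Hx Hy z w zx zt wx wt : ℝ → ℝ → ℝ} (hq1 : 0 < q1) (hq2 : 0 < q2)
    (hk : IsBacksteppingKernel q1 q2 d1 d2 p F H Fx Fy Hx Hy)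
    (hs : IsHyperbolicSolution q1 q2 d1 d2 p (1 / q2) z w zx zt wx wt)
    {t : ℝ} (ht : t ∈ Icc 0 (1 / q2)) :
    w 0 t = backstepping F H z w (q2 * t) 0 := by
  have hqt : ∀ s ∈ Icc 0 t, q2 * s ∈ Icc (0 : ℝ) 1 := fun s hs =>
    ⟨mul_nonneg hq2.le hs.1, (mul_le_mul_of_nonneg_left (hs.2.trans ht.2) hq2.le).trans
      (by rw [mul_one_div_cancel hq2.ne'])⟩
  have hts : ∀ s ∈ Icc 0 t, t - s ∈ Icc 0 (1 / q2) := fun s hs =>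
    ⟨sub_nonneg.2 hs.2, by linarith [hs.1, ht.2]⟩
  have hkernel : ∀ {K Kx Ky u ux ut : ℝ → ℝ → ℝ}, IsC1OnTriangle K Kx Ky →
      IsC1OnStrip u ux ut (1 / q2) →
      ContinuousOn (fun s => ∫ y in 0..q2 * s, K (q2 * s) y * u y (t - s)) (Icc 0 t) :=
    fun hK hu => continuousOn_intervalIntegral_of_continuousOn (by fun_prop)
      (fun s hs => (hqt s hs).1)
      ((hK.continuousOn.comp (f := fun q : ℝ × ℝ => (q2 * q.1, q.2)) (by fun_prop)
        fun q hq => ⟨hq.2.1, hq.2.2, (hqt _ hq.1).2⟩).mul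
      (hu.continuousOn.comp (f := fun q : ℝ × ℝ => (q.2, t - q.1)) (by fun_prop)
        fun q hq => ⟨⟨hq.2.1, hq.2.2.trans (hqt _ hq.1).2⟩, hts _ hq.1⟩))
  have hcont : ContinuousOn (fun s => backstepping F H z w (q2 * s) (t - s)) (Icc 0 t) :=
    ((hs.w_isC1.continuousOn.comp (f := fun s => (q2 * s, t - s)) (by fun_prop)
      fun s hs => ⟨hqt s hs, hts s hs⟩).fun_sub (hkernel hk.F_isC1 hs.z_isC1)).fun_sub
      (hkernel hk.H_isC1 hs.w_isC1)
  have hderiv : ∀ σ ∈ Ico 0 t,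
      HasDerivWithinAt (fun s => backstepping F H z w (q2 * s) (t - s)) 0 (Ici σ) σ :=
    fun σ hσ => (hasDerivWithinAt_backstepping_along_characteristic hq1 hq2 hk hs ht
      (Ico_subset_Icc_self hσ)).mono_of_mem_nhdsWithin (Icc_mem_nhdsGE hσ.2)
  have hconst := constant_of_has_deriv_right_zero hcont hderiv t (right_mem_Icc.2 ht.1)
  rw [sub_self] at hconst
  rw [hconst]
  simp [backstepping]

/-- Lemma 1 of the paper.  Before the control can reach the
distal ODE (i.e. on `[0, 1/q2]`), the output `y_1` of `Ẏ = AY + B w(0,t)`,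
driven by the coupled hyperbolic system, stays nonnegative under the
initial-data conditions expressed through `Π`. -/
theorem output_nonneg_before_control
    (q1 q2 : ℝ) (hq1 : 0 < q1) (hq2 : 0 < q2) (d1 d2 p : ℝ)
    (n : ℕ) (hn : 0 < n)
    (A : Matrix (Fin n) (Fin n) ℝ) (B : Fin n → ℝ)
    (F H Fx Fy Hx Hy : ℝ → ℝ → ℝ)
    -- F, H continuously differentiable on the triangle 𝒟, solving the kernel equations:
    (hFc : ContinuousOn (fun q : ℝ × ℝ => F q.1 q.2)
      {q : ℝ × ℝ | 0 ≤ q.2 ∧ q.2 ≤ q.1 ∧ q.1 ≤ 1})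
    (hHc : ContinuousOn (fun q : ℝ × ℝ => H q.1 q.2)
      {q : ℝ × ℝ | 0 ≤ q.2 ∧ q.2 ≤ q.1 ∧ q.1 ≤ 1})
    (hFx : ∀ x y, 0 ≤ y → y ≤ x → x ≤ 1 →
      HasDerivWithinAt (fun x' => F x' y) (Fx x y) (Icc y 1) x)
    (hFy : ∀ x y, 0 ≤ y → y ≤ x → x ≤ 1 →
      HasDerivWithinAt (fun y' => F x y') (Fy x y) (Icc 0 x) y)
    (hHx : ∀ x y, 0 ≤ y → y ≤ x → x ≤ 1 →
      HasDerivWithinAt (fun x' => H x' y) (Hx x y) (Icc y 1) x)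
    (hHy : ∀ x y, 0 ≤ y → y ≤ x → x ≤ 1 →
      HasDerivWithinAt (fun y' => H x y') (Hy x y) (Icc 0 x) y)
    (hFxc : ContinuousOn (fun q : ℝ × ℝ => Fx q.1 q.2)
      {q : ℝ × ℝ | 0 ≤ q.2 ∧ q.2 ≤ q.1 ∧ q.1 ≤ 1})
    (hFyc : ContinuousOn (fun q : ℝ × ℝ => Fy q.1 q.2)
      {q : ℝ × ℝ | 0 ≤ q.2 ∧ q.2 ≤ q.1 ∧ q.1 ≤ 1})
    (hHxc : ContinuousOn (fun q : ℝ × ℝ => Hx q.1 q.2)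
      {q : ℝ × ℝ | 0 ≤ q.2 ∧ q.2 ≤ q.1 ∧ q.1 ≤ 1})
    (hHyc : ContinuousOn (fun q : ℝ × ℝ => Hy q.1 q.2)
      {q : ℝ × ℝ | 0 ≤ q.2 ∧ q.2 ≤ q.1 ∧ q.1 ≤ 1})
    (hFpde : ∀ x y, 0 ≤ y → y ≤ x → x ≤ 1 →
      q2 * Fx x y - q1 * Fy x y = d2 * H x y)
    (hHpde : ∀ x y, 0 ≤ y → y ≤ x → x ≤ 1 →
      q2 * Hx x y + q2 * Hy x y = d1 * F x y)
    (hFbc : ∀ x ∈ Icc (0:ℝ) 1, F x x = -d2 / (q1 + q2))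
    (hHbc : ∀ x ∈ Icc (0:ℝ) 1, H x 0 = (q1 * p / q2) * F x 0)
    -- z, w continuously differentiable solutions on [0,1] × [0, 1/q2]:
    (z w zx zt wx wt : ℝ → ℝ → ℝ)
    (hzc : ContinuousOn (fun q : ℝ × ℝ => z q.1 q.2) (Icc 0 1 ×ˢ Icc 0 (1/q2)))
    (hwc : ContinuousOn (fun q : ℝ × ℝ => w q.1 q.2) (Icc 0 1 ×ˢ Icc 0 (1/q2)))
    (hzx : ∀ x ∈ Icc (0:ℝ) 1, ∀ t ∈ Icc (0:ℝ) (1/q2),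
      HasDerivWithinAt (fun x' => z x' t) (zx x t) (Icc 0 1) x)
    (hzt : ∀ x ∈ Icc (0:ℝ) 1, ∀ t ∈ Icc (0:ℝ) (1/q2),
      HasDerivWithinAt (fun t' => z x t') (zt x t) (Icc 0 (1/q2)) t)
    (hwx : ∀ x ∈ Icc (0:ℝ) 1, ∀ t ∈ Icc (0:ℝ) (1/q2),
      HasDerivWithinAt (fun x' => w x' t) (wx x t) (Icc 0 1) x)
    (hwt : ∀ x ∈ Icc (0:ℝ) 1, ∀ t ∈ Icc (0:ℝ) (1/q2),
      HasDerivWithinAt (fun t' => w x t') (wt x t) (Icc 0 (1/q2)) t)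
    (hzxc : ContinuousOn (fun q : ℝ × ℝ => zx q.1 q.2) (Icc 0 1 ×ˢ Icc 0 (1/q2)))
    (hztc : ContinuousOn (fun q : ℝ × ℝ => zt q.1 q.2) (Icc 0 1 ×ˢ Icc 0 (1/q2)))
    (hwxc : ContinuousOn (fun q : ℝ × ℝ => wx q.1 q.2) (Icc 0 1 ×ˢ Icc 0 (1/q2)))
    (hwtc : ContinuousOn (fun q : ℝ × ℝ => wt q.1 q.2) (Icc 0 1 ×ˢ Icc 0 (1/q2)))
    (hzpde : ∀ x ∈ Icc (0:ℝ) 1, ∀ t ∈ Icc (0:ℝ) (1/q2),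
      zt x t = -q1 * zx x t + d1 * w x t)
    (hwpde : ∀ x ∈ Icc (0:ℝ) 1, ∀ t ∈ Icc (0:ℝ) (1/q2),
      wt x t = q2 * wx x t + d2 * z x t)
    (hzwbc : ∀ t ∈ Icc (0:ℝ) (1/q2), z 0 t = p * w 0 t)
    -- the distal ODE Ẏ = AY + B w(0,t):
    (Y : ℝ → Fin n → ℝ)
    (hY : ∀ t ∈ Icc (0:ℝ) (1/q2),
      HasDerivAt Y (A.mulVec (Y t) + w 0 t • B) t)
    -- the function Π built from the initial data:
    (Pifun : ℝ → ℝ)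
    (hPi : ∀ ς : ℝ, Pifun ς =
      ((NormedSpace.exp ((ς / q2) • A)).mulVec (Y 0)) ⟨0, hn⟩
        + (1 / q2) * ((NormedSpace.exp ((ς / q2) • A)).mulVec
            (∫ x in (0:ℝ)..ς,
              (w x 0 - (∫ y in (0:ℝ)..x, F x y * z y 0)
                  - ∫ y in (0:ℝ)..x, H x y * w y 0)
                • (NormedSpace.exp ((-(x / q2)) • A)).mulVec B)) ⟨0, hn⟩)
    -- the initial-data conditions of Assumption 3:
    (hY0 : 0 ≤ Y 0 ⟨0, hn⟩)
    (hPi0 : ∀ ς ∈ Ioo (0:ℝ) 1, 0 ≤ Pifun ς)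
    (hPi1 : 0 < Pifun 1) :
    (∀ t ∈ Ico (0:ℝ) (1/q2), 0 ≤ Y t ⟨0, hn⟩) ∧ 0 < Y (1/q2) ⟨0, hn⟩ := by
  have hk : IsBacksteppingKernel q1 q2 d1 d2 p F H Fx Fy Hx Hy :=
    ⟨⟨hFc, hFx, hFy, hFxc, hFyc⟩, ⟨hHc, hHx, hHy, hHxc, hHyc⟩, hFpde, hHpde, hFbc, hHbc⟩
  have hs : IsHyperbolicSolution q1 q2 d1 d2 p (1 / q2) z w zx zt wx wt :=
    ⟨⟨hzc, hzx, hzt, hzxc, hztc⟩, ⟨hwc, hwx, hwt, hwxc, hwtc⟩, hzpde, hwpde, hzwbc⟩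
  have hw0 : ContinuousOn (w 0) (Icc 0 (1 / q2)) :=
    hwc.comp (continuousOn_const.prodMk continuousOn_id) fun _ ht =>
      ⟨left_mem_Icc.2 zero_le_one, ht⟩
  have hYPi : ∀ ς ∈ Icc (0 : ℝ) 1, Y (ς / q2) ⟨0, hn⟩ = Pifun ς := fun ς hς => by
    rw [state_div_eq_exp_mulVec_add_integral A B hq2 hw0 hY
      (β := fun x => backstepping F H z w x 0)
      (fun t ht => backstepping_transport hq1 hq2 hk hs ht) hς, hPi]
    rfl
  refine ⟨fun t ht => ?_, ?_⟩
  · rcases ht.1.eq_or_lt with rfl | ht0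
    · exact hY0
    have hqt : q2 * t < 1 := by simpa [hq2.ne'] using mul_lt_mul_of_pos_left ht.2 hq2
    have h := hYPi (q2 * t) ⟨by positivity, hqt.le⟩
    rw [mul_div_cancel_left₀ _ hq2.ne'] at h
    exact h ▸ hPi0 _ ⟨by positivity, hqt⟩
  · have h := hYPi 1 (right_mem_Icc.2 zero_le_one)
    exact h ▸ hPi1
end
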